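/- arXiv:1311.7252 — 4 statements merged into one kernel-verified Lean document; each statement's English description precedes it below -/
import Mathlib

section
/- Let G be a finite group, τ : G → G an involutory anti-automorphism, and (ρ,W) an irreducible (finite-dimensional complex unitary) representation of G. Then the τ-Frobenius–Schur number satisfies C_τ(ρ) ∈ {-1, 0, 1}; moreover C_τ(ρ) = 0 if and only if ρ^τ is not equivalent to ρ, and C_τ(ρ) = ±1 if and only if ρ^τ is equivalent to ρ. -/
open Module

namespace CST

variable {G : Type*} [Group G]

/-- The `τ`-conjugate representation `ρ^τ` on the dual space, `ρ^τ(g) = ρ(τ(g))^T`. -/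
def tauConj {k V : Type*} [CommRing k] [AddCommGroup V] [Module k V]
    (ρ : Representation k G V) (τ : G → G)
    (hmul : ∀ a b : G, τ (a * b) = τ b * τ a) :
    Representation k G (Module.Dual k V) where
  toFun g := (ρ (τ g)).dualMap
  map_one' := by
    have h0 : τ 1 = τ 1 * τ 1 := by simpa using hmul 1 1
    have h2 : τ 1 * 1 = τ 1 * τ 1 := by rw [mul_one]; exact h0
    have h1 : τ 1 = 1 := (mul_left_cancel h2).symm
    ext φ v
    simp [h1]
  map_mul' g h := by
    ext φ v
    simp [hmul, LinearMap.dualMap_apply, Module.End.mul_apply, map_mul]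

/-- The space of intertwining operators between two representations. -/
def repHom {k V W : Type*} [CommRing k] [AddCommGroup V] [Module k V]
    [AddCommGroup W] [Module k W]
    (ρ : Representation k G V) (σ : Representation k G W) :
    Submodule k (V →ₗ[k] W) where
  carrier := {A | ∀ g : G, A ∘ₗ ρ g = σ g ∘ₗ A}
  zero_mem' := by intro g; ext v; simp
  add_mem' := by
    intro A B hA hB g
    ext v
    have h1 := LinearMap.congr_fun (hA g) v
    have h2 := LinearMap.congr_fun (hB g) v
    simp only [LinearMap.comp_apply, LinearMap.add_apply] at *
    simp [h1, h2]
  smul_mem' := by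
    intro c A hA g
    ext v
    have h1 := LinearMap.congr_fun (hA g) v
    simp only [LinearMap.comp_apply, LinearMap.smul_apply] at *
    simp [h1]

/-- Symmetric operators `A : V' → V` (identifying `V` with its bidual):
`φ(Aψ) = ψ(Aφ)`. -/
def symSub (k V : Type*) [CommRing k] [AddCommGroup V] [Module k V] :
    Submodule k (Module.Dual k V →ₗ[k] V) where
  carrier := {A | ∀ φ ψ : Module.Dual k V, φ (A ψ) = ψ (A φ)}
  zero_mem' := by intro φ ψ; simp
  add_mem' := by
    intro A B hA hB φ ψ
    simp [hA φ ψ, hB φ ψ]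
  smul_mem' := by
    intro c A hA φ ψ
    simp [hA φ ψ]

/-- Antisymmetric operators `A : V' → V`: `φ(Aψ) = -ψ(Aφ)`. -/
def skewSub (k V : Type*) [CommRing k] [AddCommGroup V] [Module k V] :
    Submodule k (Module.Dual k V →ₗ[k] V) where
  carrier := {A | ∀ φ ψ : Module.Dual k V, φ (A ψ) = -ψ (A φ)}
  zero_mem' := by intro φ ψ; simp
  add_mem' := by
    intro A B hA hB φ ψ
    simp [hA φ ψ, hB φ ψ]; ring
  smul_mem' := by
    intro c A hA φ ψ
    simp [hA φ ψ]

/-- The `τ`-Frobenius–Schur number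
`C_τ(ρ) = dim Hom_G^Sym(ρ^τ, ρ) - dim Hom_G^Skew(ρ^τ, ρ)`. -/
noncomputable def FSnum {V : Type*} [AddCommGroup V] [Module ℂ V]
    (ρ : Representation ℂ G V) (τ : G → G)
    (hmul : ∀ a b : G, τ (a * b) = τ b * τ a) : ℤ :=
  (Module.finrank ℂ ↥(repHom (tauConj ρ τ hmul) ρ ⊓ symSub ℂ V) : ℤ)
    - (Module.finrank ℂ ↥(repHom (tauConj ρ τ hmul) ρ ⊓ skewSub ℂ V) : ℤ)

/-- Equivalence of representations. -/
def RepEquiv {k V W : Type*} [CommRing k] [AddCommGroup V] [Module k V]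
    [AddCommGroup W] [Module k W]
    (ρ : Representation k G V) (σ : Representation k G W) : Prop :=
  ∃ e : V ≃ₗ[k] W, ∀ (g : G) (v : V), e (ρ g v) = σ g (e v)

/-- Irreducibility of a representation. -/
def IsIrreducible {k V : Type*} [CommRing k] [AddCommGroup V] [Module k V]
    (ρ : Representation k G V) : Prop :=
  Nontrivial V ∧
    ∀ U : Submodule k V, (∀ (g : G), ∀ v ∈ U, ρ g v ∈ U) → U = ⊥ ∨ U = ⊤

/-- The subrepresentation on an invariant submodule. -/
def subRep {k V : Type*} [CommRing k] [AddCommGroup V] [Module k V]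
    (ρ : Representation k G V) (U : Submodule k V)
    (hU : ∀ (g : G), ∀ v ∈ U, ρ g v ∈ U) : Representation k G U where
  toFun g := (ρ g).restrict (hU g)
  map_one' := by
    ext v
    simp [LinearMap.restrict_apply]
  map_mul' g h := by
    ext v
    simp [LinearMap.restrict_apply]

/-- A representation is multiplicity-free: in any decomposition into irreducible
subrepresentations, the summands are pairwise non-equivalent. -/
def MultFree {k V : Type*} [CommRing k] [AddCommGroup V] [Module k V]
    (ρ : Representation k G V) : Prop :=
  ∀ (m : ℕ) (U : Fin m → Submodule k V)
    (hU : ∀ i, ∀ (g : G), ∀ v ∈ U i, ρ g v ∈ U i),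
    DirectSum.IsInternal U →
    (∀ i, IsIrreducible (subRep ρ (U i) (hU i))) →
    ∀ i j, i ≠ j → ¬ RepEquiv (subRep ρ (U i) (hU i)) (subRep ρ (U j) (hU j))

/-- A representation of `G` is real if it admits a basis in which all matrix
coefficients are real valued. -/
def IsRealRep {V : Type*} [AddCommGroup V] [Module ℂ V]
    (ρ : Representation ℂ G V) : Prop :=
  ∃ (n : ℕ) (b : Basis (Fin n) ℂ V),
    ∀ (g : G) (i j : Fin n), ((LinearMap.toMatrix b b (ρ g)) i j).im = 0

/-- Direct sum of two representations. -/
def prodRep {k V W : Type*} [CommRing k] [AddCommGroup V] [Module k V]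
    [AddCommGroup W] [Module k W]
    (σ : Representation k G V) (ρ : Representation k G W) :
    Representation k G (V × W) where
  toFun g := (σ g).prodMap (ρ g)
  map_one' := by
    apply LinearMap.ext
    intro x
    simp
  map_mul' g h := by
    apply LinearMap.ext
    intro x
    simp [Module.End.mul_apply]

/-- Induced representation carrier:
`Ind_K^G V = {F : G → V | F(gk) = σ(k⁻¹) F(g)}`. -/
def indCarrier {k V : Type*} [CommRing k] [AddCommGroup V] [Module k V]
    (K : Subgroup G) (σ : Representation k K V) : Submodule k (G → V) where
  carrier := {F | ∀ (g : G) (x : K), F (g * x) = σ x⁻¹ (F g)}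
  zero_mem' := by intro g x; simp
  add_mem' := by intro F₁ F₂ h₁ h₂ g x; simp [h₁ g x, h₂ g x]
  smul_mem' := by intro c F h g x; simp [h g x]

/-- The induced representation `Ind_K^G σ`, acting by `(g₀ · F)(g) = F(g₀⁻¹ g)`. -/
def indRep {k V : Type*} [CommRing k] [AddCommGroup V] [Module k V]
    (K : Subgroup G) (σ : Representation k K V) :
    Representation k G (indCarrier K σ) where
  toFun g₀ :=
    { toFun := fun F => ⟨fun g => F.1 (g₀⁻¹ * g), by
        intro g x
        have h := F.2 (g₀⁻¹ * g) x
        simpa [mul_assoc] using h⟩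
      map_add' := fun F₁ F₂ => rfl
      map_smul' := fun c F => rfl }
  map_one' := by
    apply LinearMap.ext
    intro F
    apply Subtype.ext
    funext g
    simp
  map_mul' g h := by
    apply LinearMap.ext
    intro F
    apply Subtype.ext
    funext x
    simp [mul_assoc, mul_inv_rev]

/-- The permutation representation of `G` on `L(X)`. -/
def permRep (G X : Type*) [Group G] [MulAction G X] :
    Representation ℂ G (X → ℂ) where
  toFun g :=
    { toFun := fun f x => f (g⁻¹ • x)
      map_add' := fun f₁ f₂ => rfl
      map_smul' := fun c f => rfl }
  map_one' := by
    ext f x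
    simp
  map_mul' g h := by
    ext f x
    simp [mul_smul]

/-- The twisted action `(π^τ × π)(g)(x₁,x₂) = (π(τ(g⁻¹)) x₁, π(g) x₂)` on `X × X`. -/
def twistAct {X : Type*} [MulAction G X] (τ : G → G) (g : G) (p : X × X) :
    X × X := (τ g⁻¹ • p.1, g • p.2)

/-- Orbits of the twisted action on `X × X`. -/
def IsTwistOrbit {X : Type*} [MulAction G X] (τ : G → G)
    (O : Set (X × X)) : Prop :=
  ∃ p : X × X, O = {q | ∃ g : G, q = twistAct τ g p}

/-- Orbits of the diagonal action of `G` on `X × X`. -/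
def IsDiagOrbit (G : Type*) {X : Type*} [Group G] [MulAction G X]
    (O : Set (X × X)) : Prop :=
  ∃ p : X × X, O = {q | ∃ g : G, q = (g • p.1, g • p.2)}

/-- `G` is `τ`-simply reducible: the tensor product of any two irreducible
representations is multiplicity-free, and every irreducible representation is
equivalent to its `τ`-conjugate. -/
def TauSimplyReducible (G : Type*) [Group G] (τ : G → G)
    (hmul : ∀ a b : G, τ (a * b) = τ b * τ a) : Prop :=
  (∀ (V W : Type) [AddCommGroup V] [Module ℂ V] [FiniteDimensional ℂ V]
      [AddCommGroup W] [Module ℂ W] [FiniteDimensional ℂ W]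
      (ρ₁ : Representation ℂ G V) (ρ₂ : Representation ℂ G W),
      IsIrreducible ρ₁ → IsIrreducible ρ₂ → MultFree (ρ₁.tprod ρ₂)) ∧
  (∀ (V : Type) [AddCommGroup V] [Module ℂ V] [FiniteDimensional ℂ V]
      (ρ : Representation ℂ G V), IsIrreducible ρ → RepEquiv (tauConj ρ τ hmul) ρ)

/-- The double coset of `s` with respect to the diagonal subgroup of `G × G × G`. -/
def diagCoset3 (G : Type*) [Group G] (s : G × G × G) : Set (G × G × G) :=
  {x | ∃ a b : G, x = (a, a, a) * s * (b, b, b)}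

/-- The character of a representation. -/
noncomputable def repChar {V : Type*} [AddCommGroup V] [Module ℂ V]
    (σ : Representation ℂ G V) (g : G) : ℂ :=
  LinearMap.trace ℂ V (σ g)

end CST


section Aux

open CST Module

variable {G : Type*} [Group G]
variable {V : Type*} [AddCommGroup V] [Module ℂ V] [FiniteDimensional ℂ V]
variable {τ : G → G} {hmul : ∀ a b : G, τ (a * b) = τ b * τ a}
variable {ρ : Representation ℂ G V}

lemma CSTaux_mem_repHom {k V W : Type*} [CommRing k] [AddCommGroup V] [Module k V]
    [AddCommGroup W] [Module k W]
    (σ : Representation k G V) (ρ : Representation k G W) (A : V →ₗ[k] W) :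
    A ∈ CST.repHom σ ρ ↔ ∀ g : G, A ∘ₗ σ g = ρ g ∘ₗ A := Iff.rfl

lemma CSTaux_tauConj_apply (g : G) (φ : Dual ℂ V) (v : V) :
    CST.tauConj ρ τ hmul g φ v = φ (ρ (τ g) v) := rfl

lemma CSTaux_dual_ext {v w : V} (h : ∀ φ : Dual ℂ V, φ v = φ w) : v = w := by
  have h0 := (Module.forall_dual_apply_eq_zero_iff ℂ (v - w)).mp (by
    intro φ; simp [h φ])
  exact sub_eq_zero.mp h0

/-- A `tauConj`-invariant subspace of the dual is `⊥` or `⊤`. -/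
lemma CSTaux_dual_invariant (hinv : ∀ g : G, τ (τ g) = g)
    (hirr : CST.IsIrreducible ρ) (U : Submodule ℂ (Dual ℂ V))
    (hU : ∀ g : G, ∀ φ ∈ U, CST.tauConj ρ τ hmul g φ ∈ U) :
    U = ⊥ ∨ U = ⊤ := by
  have hW : ∀ g : G, ∀ v ∈ U.dualCoannihilator, ρ g v ∈ U.dualCoannihilator := by
    intro g v hv
    rw [Submodule.mem_dualCoannihilator] at hv ⊢
    intro φ hφ
    have h1 : CST.tauConj ρ τ hmul (τ g) φ ∈ U := hU _ φ hφ
    have h2 := hv _ h1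
    rwa [CSTaux_tauConj_apply, hinv] at h2
  rcases hirr.2 _ hW with h | h
  · right
    have hfr := Subspace.finrank_add_finrank_dualCoannihilator_eq U
    rw [h, finrank_bot] at hfr
    apply Submodule.eq_top_of_finrank_eq
    rw [Subspace.dual_finrank_eq]
    omega
  · left
    rw [Submodule.eq_bot_iff]
    intro φ hφ
    ext v
    have hv : v ∈ U.dualCoannihilator := h ▸ Submodule.mem_top
    simpa using (Submodule.mem_dualCoannihilator v).mp hv φ hφ

lemma CSTaux_bijective (hinv : ∀ g : G, τ (τ g) = g)
    (hirr : CST.IsIrreducible ρ) {A : Dual ℂ V →ₗ[ℂ] V}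
    (hA : A ∈ CST.repHom (CST.tauConj ρ τ hmul) ρ) (hA0 : A ≠ 0) :
    Function.Bijective A := by
  constructor
  · rw [← LinearMap.ker_eq_bot]
    rcases CSTaux_dual_invariant hinv hirr (LinearMap.ker A) (by
      intro g φ hφ
      rw [LinearMap.mem_ker] at hφ ⊢
      have h1 := LinearMap.congr_fun (hA g) φ
      simp only [LinearMap.comp_apply] at h1
      rw [h1, hφ, map_zero]) with h | h
    · exact h
    · exact absurd (LinearMap.ker_eq_top.mp h) hA0
  · rw [← LinearMap.range_eq_top]
    rcases hirr.2 (LinearMap.range A) (by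
      intro g v hv
      rcases LinearMap.mem_range.mp hv with ⟨φ, rfl⟩
      have h1 := LinearMap.congr_fun (hA g) φ
      simp only [LinearMap.comp_apply] at h1
      exact ⟨CST.tauConj ρ τ hmul g φ, h1⟩) with h | h
    · exfalso; apply hA0
      rw [← LinearMap.range_eq_bot] ; exact h
    · exact h

lemma CSTaux_repEquiv_iff (hinv : ∀ g : G, τ (τ g) = g)
    (hirr : CST.IsIrreducible ρ) :
    CST.RepEquiv (CST.tauConj ρ τ hmul) ρ ↔
      CST.repHom (CST.tauConj ρ τ hmul) ρ ≠ ⊥ := by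
  constructor
  · rintro ⟨e, he⟩
    rw [Submodule.ne_bot_iff]
    refine ⟨e.toLinearMap, ?_, ?_⟩
    · intro g; ext φ; simpa using he g φ
    · intro h0
      haveI : Nontrivial V := hirr.1
      obtain ⟨v, hv⟩ := exists_ne (0 : V)
      apply hv
      have : e (e.symm v) = 0 := by
        rw [show (e (e.symm v)) = e.toLinearMap (e.symm v) from rfl, h0]; simp
      simpa using this
  · intro h
    obtain ⟨A, hA, hA0⟩ := Submodule.ne_bot_iff _ |>.mp h
    have hb := CSTaux_bijective hinv hirr hA hA0
    refine ⟨LinearEquiv.ofBijective A hb, ?_⟩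
    intro g φ
    have h1 := LinearMap.congr_fun (hA g) φ
    simpa using h1

lemma CSTaux_finrank_le_one (hinv : ∀ g : G, τ (τ g) = g)
    (hirr : CST.IsIrreducible ρ) :
    finrank ℂ ↥(CST.repHom (CST.tauConj ρ τ hmul) ρ) ≤ 1 := by
  by_cases hbot : CST.repHom (CST.tauConj ρ τ hmul) ρ = ⊥
  · rw [hbot, finrank_bot]; omega
  obtain ⟨A, hA, hA0⟩ := Submodule.ne_bot_iff _ |>.mp hbot
  have hb := CSTaux_bijective hinv hirr hA hA0
  set e := LinearEquiv.ofBijective A hb with he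
  have hv : ∀ v : V, A (e.symm v) = v := fun v => e.apply_symm_apply v
  have hsymm : ∀ ψ : Dual ℂ V, e.symm (A ψ) = ψ := fun ψ => e.symm_apply_apply ψ
  have hspan : CST.repHom (CST.tauConj ρ τ hmul) ρ ≤ ℂ ∙ A := by
    intro B hB
    haveI hnt : Nontrivial V := hirr.1
    set f : Module.End ℂ V := B ∘ₗ (e.symm : V →ₗ[ℂ] Dual ℂ V) with hf
    have hcomm : ∀ (g : G) (v : V), f (ρ g v) = ρ g (f v) := by
      intro g v
      have hAg := LinearMap.congr_fun (hA g) (e.symm v)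
      have hBg := LinearMap.congr_fun (hB g) (e.symm v)
      simp only [LinearMap.comp_apply] at hAg hBg
      calc f (ρ g v) = B (e.symm (ρ g (A (e.symm v)))) := by rw [hv v]; rfl
        _ = B (e.symm (A (CST.tauConj ρ τ hmul g (e.symm v)))) := by rw [hAg]
        _ = B (CST.tauConj ρ τ hmul g (e.symm v)) := by rw [hsymm]
        _ = ρ g (B (e.symm v)) := hBg
        _ = ρ g (f v) := rfl
      
    obtain ⟨μ, hμ⟩ := @Module.End.exists_eigenvalue ℂ V _ _ _ _ _ hnt f
    have hker : ∀ g : G, ∀ v ∈ f.eigenspace μ, ρ g v ∈ f.eigenspace μ := by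
      intro g v hv
      rw [Module.End.mem_eigenspace_iff] at hv ⊢
      rw [hcomm, hv, map_smul]
    rcases hirr.2 _ hker with h | h
    · exact absurd h hμ
    · have hall : ∀ v : V, f v = μ • v := by
        intro v
        have : v ∈ f.eigenspace μ := h ▸ Submodule.mem_top
        exact Module.End.mem_eigenspace_iff.mp this
      rw [Submodule.mem_span_singleton]
      refine ⟨μ, ?_⟩
      ext ψ
      have := hall (A ψ)
      simp only [hf, LinearMap.comp_apply] at this
      simp only [LinearEquiv.coe_coe] at this
      rw [hsymm] at this
      simpa using this.symm
  calc finrank ℂ ↥(CST.repHom (CST.tauConj ρ τ hmul) ρ)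
      ≤ finrank ℂ ↥(ℂ ∙ A) := Submodule.finrank_mono hspan
    _ = 1 := finrank_span_singleton hA0

/-- transpose of an operator `Dual V → V`. -/
noncomputable def CSTtransp (A : Dual ℂ V →ₗ[ℂ] V) : Dual ℂ V →ₗ[ℂ] V :=
  ((Module.evalEquiv ℂ V).symm : Dual ℂ (Dual ℂ V) →ₗ[ℂ] V) ∘ₗ A.dualMap

lemma CSTtransp_apply (A : Dual ℂ V →ₗ[ℂ] V) (φ ψ : Dual ℂ V) :
    φ (CSTtransp A ψ) = ψ (A φ) := by
  have h : Module.evalEquiv ℂ V (CSTtransp A ψ) = A.dualMap ψ :=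
    (Module.evalEquiv ℂ V).apply_symm_apply _
  have h2 : Module.evalEquiv ℂ V (CSTtransp A ψ) φ = A.dualMap ψ φ := by rw [h]
  simpa [Module.evalEquiv_apply, Module.Dual.eval_apply, LinearMap.dualMap_apply] using h2

lemma CSTtransp_mem (hinv : ∀ g : G, τ (τ g) = g)
    {A : Dual ℂ V →ₗ[ℂ] V} (hA : A ∈ CST.repHom (CST.tauConj ρ τ hmul) ρ) :
    CSTtransp A ∈ CST.repHom (CST.tauConj ρ τ hmul) ρ := by
  intro g
  ext ψ
  simp only [LinearMap.comp_apply]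
  apply CSTaux_dual_ext
  intro φ
  have hAg := LinearMap.congr_fun (hA (τ g)) φ
  simp only [LinearMap.comp_apply] at hAg
  calc φ (CSTtransp A (CST.tauConj ρ τ hmul g ψ))
      = (CST.tauConj ρ τ hmul g ψ) (A φ) := CSTtransp_apply ..
    _ = ψ (ρ (τ g) (A φ)) := rfl
    _ = ψ (A (CST.tauConj ρ τ hmul (τ g) φ)) := by rw [hAg]
    _ = (CST.tauConj ρ τ hmul (τ g) φ) (CSTtransp A ψ) := (CSTtransp_apply ..).symm
    _ = φ (ρ (τ (τ g)) (CSTtransp A ψ)) := rfl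
    _ = φ (ρ g (CSTtransp A ψ)) := by rw [hinv]

end Aux

/-- For an irreducible finite-dimensional complex representation `ρ`
of a finite group `G` with an involutory anti-automorphism `τ`, the
`τ`-Frobenius–Schur number lies in `{-1, 0, 1}`; it is `0` iff `ρ^τ` is not
equivalent to `ρ`, and `±1` iff `ρ^τ` is equivalent to `ρ`. -/
theorem tau_FS_number_of_irreducible
    {G : Type*} [Group G] [Fintype G]
    {V : Type*} [AddCommGroup V] [Module ℂ V] [FiniteDimensional ℂ V]
    (τ : G → G) (hmul : ∀ a b : G, τ (a * b) = τ b * τ a)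
    (hinv : ∀ g : G, τ (τ g) = g)
    (ρ : Representation ℂ G V) (hirr : CST.IsIrreducible ρ) :
    CST.FSnum ρ τ hmul ∈ ({-1, 0, 1} : Set ℤ) ∧
    (CST.FSnum ρ τ hmul = 0 ↔ ¬ CST.RepEquiv (CST.tauConj ρ τ hmul) ρ) ∧
    ((CST.FSnum ρ τ hmul = 1 ∨ CST.FSnum ρ τ hmul = -1) ↔
      CST.RepEquiv (CST.tauConj ρ τ hmul) ρ) := by
  classical
  set H := CST.repHom (CST.tauConj ρ τ hmul) ρ with hH
  set S := H ⊓ CST.symSub ℂ V with hS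
  set K := H ⊓ CST.skewSub ℂ V with hK
  have hsup : S ⊔ K = H := by
    apply le_antisymm (sup_le inf_le_left inf_le_left)
    intro A hA
    have hT := CSTtransp_mem hinv hA
    have hsymm : (2⁻¹ : ℂ) • (A + CSTtransp A) ∈ S := by
      refine Submodule.mem_inf.mpr ⟨Submodule.smul_mem _ _ (Submodule.add_mem _ hA hT), ?_⟩
      intro φ ψ
      simp only [LinearMap.smul_apply, LinearMap.add_apply, map_smul, map_add, smul_eq_mul]
      rw [CSTtransp_apply, CSTtransp_apply]
      ring
    have hskew : (2⁻¹ : ℂ) • (A - CSTtransp A) ∈ K := by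
      refine Submodule.mem_inf.mpr ⟨Submodule.smul_mem _ _ (Submodule.sub_mem _ hA hT), ?_⟩
      intro φ ψ
      simp only [LinearMap.smul_apply, LinearMap.sub_apply, map_smul, map_sub, smul_eq_mul]
      rw [CSTtransp_apply, CSTtransp_apply]
      ring
    have hdecomp : A = (2⁻¹ : ℂ) • (A + CSTtransp A) + (2⁻¹ : ℂ) • (A - CSTtransp A) := by
      module
    rw [hdecomp]
    exact Submodule.add_mem_sup hsymm hskew
  have hinf : S ⊓ K = ⊥ := by
    rw [Submodule.eq_bot_iff]
    intro A hA
    have h1 : ∀ φ ψ : Dual ℂ V, φ (A ψ) = ψ (A φ) :=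
      (Submodule.mem_inf.mp (Submodule.mem_inf.mp hA).1).2
    have h2 : ∀ φ ψ : Dual ℂ V, φ (A ψ) = -ψ (A φ) :=
      (Submodule.mem_inf.mp (Submodule.mem_inf.mp hA).2).2
    ext ψ
    apply CSTaux_dual_ext
    intro φ
    have := h1 φ ψ
    have := h2 φ ψ
    simp only [LinearMap.zero_apply, map_zero]
    linear_combination (h1 φ ψ + h2 φ ψ) / 2
  have hsum : finrank ℂ S + finrank ℂ K = finrank ℂ H := by
    have := Submodule.finrank_sup_add_finrank_inf_eq S K
    rw [hsup, hinf, finrank_bot] at this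
    omega
  have hle : finrank ℂ H ≤ 1 := CSTaux_finrank_le_one hinv hirr
  have hiff : CST.RepEquiv (CST.tauConj ρ τ hmul) ρ ↔ finrank ℂ H ≠ 0 := by
    rw [CSTaux_repEquiv_iff hinv hirr]
    rw [not_iff_not.symm, not_ne_iff, not_not, Submodule.finrank_eq_zero]
  have hFS : CST.FSnum ρ τ hmul = (finrank ℂ S : ℤ) - finrank ℂ K := rfl
  rw [hFS]
  by_cases heq : CST.RepEquiv (CST.tauConj ρ τ hmul) ρ
  · have h1 : finrank ℂ H = 1 := by
      have := hiff.mp heq; omega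
    refine ⟨?_, ?_, ?_⟩
    · simp only [Set.mem_insert_iff, Set.mem_singleton_iff]
      omega
    · constructor
      · intro h; omega
      · intro h; exact absurd heq h
    · constructor
      · intro _; exact heq
      · intro _; omega
  · have h0 : finrank ℂ H = 0 := by
      by_contra h; exact heq (hiff.mpr h)
    have hs : finrank ℂ S = 0 := by omega
    have hk : finrank ℂ K = 0 := by omega
    refine ⟨?_, ?_, ?_⟩
    · simp [hs, hk]
    · simp [hs, hk, heq]
    · constructor
      · intro h; rcases h with h | h <;> omega
      · intro h; exact absurd h heq
end

section
/- Let G be a finite group and (ρ,W) an irreducible finite-dimensional complex unitary representation of G. Let C(ρ) = dim Hom_G^Sym(ρ′, ρ) − dim Hom_G^Skew(ρ′, ρ), where ρ′ is the conjugate (dual) representation. Then C(ρ) = 1 if ρ is real, C(ρ) = 0 if ρ is complex (i.e. ρ′ is not equivalent to ρ), and C(ρ) = −1 if ρ is quaternionic. -/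
open Module

namespace FSAux

open CST Module

variable {G : Type*} [Group G] [Fintype G]
variable {V : Type*} [AddCommGroup V] [Module ℂ V] [FiniteDimensional ℂ V]

/-- The conjugate (dual) representation, specialized to `τ g = g⁻¹`. -/
abbrev dR (ρ : Representation ℂ G V) : Representation ℂ G (Dual ℂ V) :=
  CST.tauConj ρ (fun g => g⁻¹) (fun a b => mul_inv_rev a b)

lemma dR_apply (ρ : Representation ℂ G V) (g : G) (φ : Dual ℂ V) (v : V) :
    dR ρ g φ v = φ (ρ g⁻¹ v) := rfl

lemma mem_repHom {ρ : Representation ℂ G V} {A : Dual ℂ V →ₗ[ℂ] V} :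
    A ∈ repHom (dR ρ) ρ ↔ ∀ g : G, A ∘ₗ dR ρ g = ρ g ∘ₗ A := Iff.rfl

lemma mem_symSub {A : Dual ℂ V →ₗ[ℂ] V} :
    A ∈ symSub ℂ V ↔ ∀ φ ψ : Dual ℂ V, φ (A ψ) = ψ (A φ) := Iff.rfl

lemma mem_skewSub {A : Dual ℂ V →ₗ[ℂ] V} :
    A ∈ skewSub ℂ V ↔ ∀ φ ψ : Dual ℂ V, φ (A ψ) = -ψ (A φ) := Iff.rfl

lemma ext_dual {A B : Dual ℂ V →ₗ[ℂ] V}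
    (h : ∀ φ ψ : Dual ℂ V, ψ (A φ) = ψ (B φ)) : A = B := by
  ext φ
  have h2 : ∀ ψ : Dual ℂ V, ψ (A φ - B φ) = 0 := by
    intro ψ; rw [map_sub, h φ ψ, sub_self]
  have := (Module.forall_dual_apply_eq_zero_iff ℂ (A φ - B φ)).mp h2
  exact sub_eq_zero.mp this

/-- Schur's lemma, endomorphism version. -/
lemma schur_endo {ρ : Representation ℂ G V} (hirr : IsIrreducible ρ)
    (f : V →ₗ[ℂ] V) (hf : ∀ g : G, f ∘ₗ ρ g = ρ g ∘ₗ f) :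
    ∃ c : ℂ, ∀ v, f v = c • v := by
  haveI : Nontrivial V := hirr.1
  obtain ⟨c, hc⟩ := Module.End.exists_eigenvalue (f : Module.End ℂ V)
  refine ⟨c, ?_⟩
  have hU : ∀ g : G, ∀ v ∈ Module.End.eigenspace f c,
      ρ g v ∈ Module.End.eigenspace f c := by
    intro g v hv
    rw [Module.End.mem_eigenspace_iff] at hv ⊢
    have h1 := LinearMap.congr_fun (hf g) v
    simp only [LinearMap.comp_apply] at h1
    rw [h1, hv, map_smul]
  rcases hirr.2 _ hU with h | h
  · exact absurd h (Module.End.hasEigenvalue_iff.mp hc)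
  · intro v
    have hv : v ∈ Module.End.eigenspace f c := h ▸ Submodule.mem_top
    exact Module.End.mem_eigenspace_iff.mp hv

/-- A nonzero intertwiner from the dual representation is bijective. -/
lemma bijective_of_mem_ne_zero {ρ : Representation ℂ G V} (hirr : IsIrreducible ρ)
    {A : Dual ℂ V →ₗ[ℂ] V} (hA : A ∈ repHom (dR ρ) ρ) (hA0 : A ≠ 0) :
    Function.Bijective A := by
  have hrange : ∀ g : G, ∀ v ∈ LinearMap.range A, ρ g v ∈ LinearMap.range A := by
    intro g v hv
    obtain ⟨φ, rfl⟩ := hv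
    refine ⟨dR ρ g φ, ?_⟩
    have := LinearMap.congr_fun (hA g) φ
    simpa using this
  have hsurj : Function.Surjective A := by
    rcases hirr.2 _ hrange with h | h
    · exfalso; apply hA0
      ext φ
      have hm : A φ ∈ LinearMap.range A := ⟨φ, rfl⟩
      rw [h] at hm
      simpa using hm
    · exact LinearMap.range_eq_top.mp h
  have hker : LinearMap.ker A = ⊥ := by
    have h1 := LinearMap.finrank_range_add_finrank_ker A
    rw [LinearMap.range_eq_top.mpr hsurj, finrank_top] at h1
    have h2 : finrank ℂ (Dual ℂ V) = finrank ℂ V := Subspace.dual_finrank_eq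
    have h3 : finrank ℂ (LinearMap.ker A) = 0 := by omega
    exact Submodule.finrank_eq_zero.mp h3
  exact ⟨LinearMap.ker_eq_bot.mp hker, hsurj⟩

/-- Transpose of an operator `Dual V → V`, using the bidual identification. -/
noncomputable def transp (A : Dual ℂ V →ₗ[ℂ] V) : Dual ℂ V →ₗ[ℂ] V :=
  ((evalEquiv ℂ V).symm : Dual ℂ (Dual ℂ V) →ₗ[ℂ] V) ∘ₗ A.dualMap

lemma transp_apply_apply (A : Dual ℂ V →ₗ[ℂ] V) (φ ψ : Dual ℂ V) :
    ψ (transp A φ) = φ (A ψ) := by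
  simp [transp, Module.apply_evalEquiv_symm_apply]

lemma transp_mem {ρ : Representation ℂ G V} {A : Dual ℂ V →ₗ[ℂ] V}
    (hA : A ∈ repHom (dR ρ) ρ) : transp A ∈ repHom (dR ρ) ρ := by
  rw [mem_repHom]
  intro g
  apply ext_dual
  intro φ ψ
  have h1 := LinearMap.congr_fun (hA g⁻¹) ψ
  simp only [LinearMap.comp_apply] at h1
  calc ψ ((transp A ∘ₗ dR ρ g) φ) = (dR ρ g φ) (A ψ) := by
        simp only [LinearMap.comp_apply]; rw [transp_apply_apply]
    _ = φ (ρ g⁻¹ (A ψ)) := rfl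
    _ = φ (A (dR ρ g⁻¹ ψ)) := by rw [← h1]
    _ = (dR ρ g⁻¹ ψ) (transp A φ) := (transp_apply_apply A φ _).symm
    _ = ψ (ρ g⁻¹⁻¹ (transp A φ)) := rfl
    _ = ψ ((ρ g ∘ₗ transp A) φ) := by rw [inv_inv]; rfl

/-- The dimension of the space of intertwiners splits into symmetric and
antisymmetric parts. -/
lemma finrank_split (ρ : Representation ℂ G V) :
    finrank ℂ ↥(repHom (dR ρ) ρ ⊓ symSub ℂ V)
      + finrank ℂ ↥(repHom (dR ρ) ρ ⊓ skewSub ℂ V)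
      = finrank ℂ ↥(repHom (dR ρ) ρ) := by
  have hinf : (repHom (dR ρ) ρ ⊓ symSub ℂ V) ⊓ (repHom (dR ρ) ρ ⊓ skewSub ℂ V)
      = ⊥ := by
    rw [Submodule.eq_bot_iff]
    intro A hA
    rw [Submodule.mem_inf, Submodule.mem_inf, Submodule.mem_inf] at hA
    obtain ⟨⟨-, hs⟩, -, hk⟩ := hA
    have hz : ∀ ψ φ : Dual ℂ V, φ (A ψ) = 0 := by
      intro ψ φ
      have h1 := mem_symSub.mp hs φ ψ
      have h2 := mem_skewSub.mp hk φ ψ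
      have h3 : (2 : ℂ) * φ (A ψ) = 0 := by linear_combination h1 + h2
      have h4 : (2 : ℂ) ≠ 0 := two_ne_zero
      exact (mul_eq_zero.mp h3).resolve_left h4
    ext ψ
    exact (Module.forall_dual_apply_eq_zero_iff ℂ (A ψ)).mp (hz ψ)
  have hsup : (repHom (dR ρ) ρ ⊓ symSub ℂ V) ⊔ (repHom (dR ρ) ρ ⊓ skewSub ℂ V)
      = repHom (dR ρ) ρ := by
    apply le_antisymm
    · exact sup_le inf_le_left inf_le_left
    · intro A hA
      have hA' := transp_mem hA
      have hmemS : (2⁻¹ : ℂ) • (A + transp A) ∈ repHom (dR ρ) ρ ⊓ symSub ℂ V := by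
        rw [Submodule.mem_inf]
        constructor
        · exact Submodule.smul_mem _ _ (Submodule.add_mem _ hA hA')
        · rw [mem_symSub]
          intro φ ψ
          simp only [LinearMap.smul_apply, LinearMap.add_apply, map_smul, map_add,
            smul_eq_mul, transp_apply_apply]
          ring
      have hmemK : (2⁻¹ : ℂ) • (A - transp A) ∈ repHom (dR ρ) ρ ⊓ skewSub ℂ V := by
        rw [Submodule.mem_inf]
        constructor
        · exact Submodule.smul_mem _ _ (Submodule.sub_mem _ hA hA')
        · rw [mem_skewSub]
          intro φ ψ
          simp only [LinearMap.smul_apply, LinearMap.sub_apply, map_smul, map_sub,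
            smul_eq_mul, transp_apply_apply]
          ring
      have hdecomp : A = (2⁻¹ : ℂ) • (A + transp A) + (2⁻¹ : ℂ) • (A - transp A) := by
        module
      rw [hdecomp]
      exact Submodule.add_mem_sup hmemS hmemK
  have h := Submodule.finrank_sup_add_finrank_inf_eq
    (repHom (dR ρ) ρ ⊓ symSub ℂ V) (repHom (dR ρ) ρ ⊓ skewSub ℂ V)
  rw [hinf, hsup, finrank_bot, add_zero] at h
  omega

/-- Schur's lemma: the space of intertwiners has dimension at most 1. -/
lemma finrank_hom_le_one {ρ : Representation ℂ G V} (hirr : IsIrreducible ρ) :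
    finrank ℂ ↥(repHom (dR ρ) ρ) ≤ 1 := by
  by_cases hbot : repHom (dR ρ) ρ = ⊥
  · rw [hbot, finrank_bot]; omega
  · obtain ⟨B, hB, hB0⟩ := Submodule.exists_mem_ne_zero_of_ne_bot hbot
    have hbij := bijective_of_mem_ne_zero hirr hB hB0
    set e := LinearEquiv.ofBijective B hbij with he
    have hsymm_equiv : ∀ (g : G) (v : V), e.symm (ρ g v) = dR ρ g (e.symm v) := by
      intro g v
      apply e.injective
      rw [e.apply_symm_apply]
      have h1 : e (dR ρ g (e.symm v)) = B (dR ρ g (e.symm v)) := rfl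
      rw [h1]
      have h2 := LinearMap.congr_fun (hB g) (e.symm v)
      simp only [LinearMap.comp_apply] at h2
      rw [h2]
      congr 1
      exact (e.apply_symm_apply v).symm
    have key : repHom (dR ρ) ρ ≤ ℂ ∙ B := by
      intro A hA
      set f : V →ₗ[ℂ] V := A ∘ₗ (e.symm : V →ₗ[ℂ] Dual ℂ V) with hf
      have hfcomm : ∀ g : G, f ∘ₗ ρ g = ρ g ∘ₗ f := by
        intro g
        ext v
        simp only [hf, LinearMap.comp_apply, LinearEquiv.coe_coe]
        rw [hsymm_equiv g v]
        have h2 := LinearMap.congr_fun (hA g) (e.symm v)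
        simp only [LinearMap.comp_apply] at h2
        exact h2
      obtain ⟨c, hc⟩ := schur_endo hirr f hfcomm
      rw [Submodule.mem_span_singleton]
      refine ⟨c, ?_⟩
      ext φ
      have h3 := hc (B φ)
      simp only [hf, LinearMap.comp_apply, LinearEquiv.coe_coe] at h3
      have h4 : e.symm (B φ) = φ := e.symm_apply_apply φ
      rw [h4] at h3
      simpa using h3.symm
    calc finrank ℂ ↥(repHom (dR ρ) ρ) ≤ finrank ℂ ↥(ℂ ∙ B) :=
          Submodule.finrank_mono key
      _ = 1 := finrank_span_singleton hB0

/-- If the representation is real, there is a nonzero symmetric intertwiner. -/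
lemma exists_sym_of_real {ρ : Representation ℂ G V} (hirr : IsIrreducible ρ)
    (hreal : IsRealRep ρ) :
    ∃ A : Dual ℂ V →ₗ[ℂ] V, A ∈ repHom (dR ρ) ρ ⊓ symSub ℂ V ∧ A ≠ 0 := by
  haveI : Nontrivial V := hirr.1
  obtain ⟨n, b, hb⟩ := hreal
  obtain ⟨i₀⟩ : Nonempty (Fin n) := b.index_nonempty
  set B0 : V →ₗ[ℂ] Dual ℂ V := ∑ i : Fin n, (b.coord i).smulRight (b.coord i)
    with hB0def
  have hB0app : ∀ v w : V, B0 v w = ∑ i, b.repr v i * b.repr w i := by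
    intro v w
    simp [hB0def, LinearMap.sum_apply, Basis.coord_apply]
  set T : V →ₗ[ℂ] Dual ℂ V := ∑ g : G, (ρ g).dualMap ∘ₗ (B0 ∘ₗ ρ g) with hTdef
  have hTapp : ∀ v w : V, T v w = ∑ g : G, B0 (ρ g v) (ρ g w) := by
    intro v w
    simp [hTdef, LinearMap.sum_apply]
  have hTsymm : ∀ v w : V, T v w = T w v := by
    intro v w
    rw [hTapp, hTapp]
    refine Finset.sum_congr rfl fun g _ => ?_
    rw [hB0app, hB0app]
    exact Finset.sum_congr rfl fun i _ => mul_comm _ _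
  have hmul2 : ∀ (g h : G) (v : V), ρ g (ρ h v) = ρ (g * h) v := by
    intro g h v
    rw [map_mul]
    rfl
  have hTint : ∀ (h : G) (v : V), T (ρ h v) = dR ρ h (T v) := by
    intro h v
    ext w
    have h1 : dR ρ h (T v) w = T v (ρ h⁻¹ w) := rfl
    rw [h1, hTapp, hTapp]
    refine Fintype.sum_equiv (Equiv.mulRight h) _ _ fun g => ?_
    simp only [Equiv.coe_mulRight]
    rw [hmul2 g h v, hmul2 (g * h) h⁻¹ w, mul_assoc, mul_inv_cancel, mul_one]
  -- T is nonzero at (b i₀, b i₀).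
  have hentry : ∀ (g : G) (i : Fin n), (b.repr (ρ g (b i₀)) i).im = 0 := by
    intro g i
    have := hb g i i₀
    rwa [LinearMap.toMatrix_apply] at this
  have hF : ∀ g : G, 0 ≤ (B0 (ρ g (b i₀)) (ρ g (b i₀))).re := by
    intro g
    rw [hB0app, Complex.re_sum]
    apply Finset.sum_nonneg
    intro i _
    have h1 := hentry g i
    rw [Complex.mul_re, h1]
    nlinarith [sq_nonneg (b.repr (ρ g (b i₀)) i).re]
  have hF1 : (B0 (ρ 1 (b i₀)) (ρ 1 (b i₀))).re = 1 := by
    rw [map_one]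
    have h1 : ((1 : V →ₗ[ℂ] V) : V →ₗ[ℂ] V) (b i₀) = b i₀ := rfl
    rw [h1, hB0app]
    rw [Complex.re_sum]
    have h2 : ∀ i : Fin n, (b.repr (b i₀) i * b.repr (b i₀) i).re
        = if i = i₀ then 1 else 0 := by
      intro i
      rw [Basis.repr_self]
      by_cases hi : i = i₀
      · subst hi; simp
      · simp [Finsupp.single_apply, Ne.symm hi, hi]
    rw [Finset.sum_congr rfl fun i _ => h2 i]
    simp
  have hTne : T (b i₀) (b i₀) ≠ 0 := by
    intro hzero
    have h1 : (T (b i₀) (b i₀)).re = ∑ g : G, (B0 (ρ g (b i₀)) (ρ g (b i₀))).re := by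
      rw [hTapp, Complex.re_sum]
    have h2 : (1 : ℝ) ≤ (T (b i₀) (b i₀)).re := by
      rw [h1, ← hF1]
      exact Finset.single_le_sum (fun g _ => hF g) (Finset.mem_univ 1)
    rw [hzero] at h2
    norm_num at h2
  have hT0 : T ≠ 0 := by
    intro hzero
    apply hTne
    rw [hzero]
    rfl
  have hker : LinearMap.ker T = ⊥ := by
    have hinv : ∀ g : G, ∀ v ∈ LinearMap.ker T, ρ g v ∈ LinearMap.ker T := by
      intro g v hv
      rw [LinearMap.mem_ker] at hv ⊢
      rw [hTint g v, hv, map_zero]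
    rcases hirr.2 _ hinv with h | h
    · exact h
    · exfalso
      apply hT0
      ext v
      have : v ∈ LinearMap.ker T := h ▸ Submodule.mem_top
      rw [LinearMap.mem_ker] at this
      simp [this]
  have hinj : Function.Injective T := LinearMap.ker_eq_bot.mp hker
  have hsurj : Function.Surjective T := by
    rw [← LinearMap.range_eq_top]
    apply Submodule.eq_top_of_finrank_eq
    have h1 := LinearMap.finrank_range_add_finrank_ker T
    rw [hker, finrank_bot, add_zero] at h1
    rw [h1]
    exact Subspace.dual_finrank_eq.symm
  set e : V ≃ₗ[ℂ] Dual ℂ V := LinearEquiv.ofBijective T ⟨hinj, hsurj⟩ with hedef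
  set A : Dual ℂ V →ₗ[ℂ] V := e.symm.toLinearMap with hAdef
  have hAT : ∀ v : V, A (T v) = v := fun v => e.symm_apply_apply v
  have hTA : ∀ φ : Dual ℂ V, T (A φ) = φ := fun φ => e.apply_symm_apply φ
  refine ⟨A, ?_, ?_⟩
  · rw [Submodule.mem_inf]
    constructor
    · rw [mem_repHom]
      intro g
      ext φ
      simp only [LinearMap.comp_apply]
      apply hinj
      rw [hTA, hTint g (A φ), hTA]
    · rw [mem_symSub]
      intro φ ψ
      conv_lhs => rw [← hTA φ]
      conv_rhs => rw [← hTA ψ]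
      exact hTsymm (A φ) (A ψ)
  · intro hzero
    apply hTne
    have hb0 : b i₀ = A (T (b i₀)) := (hAT _).symm
    rw [hzero] at hb0
    simp only [LinearMap.zero_apply] at hb0
    rw [hb0]
    simp

/-- A nonzero symmetric intertwiner forces the representation to be real. -/
lemma isReal_of_sym {ρ : Representation ℂ G V} (hirr : IsIrreducible ρ)
    {A : Dual ℂ V →ₗ[ℂ] V} (hA : A ∈ repHom (dR ρ) ρ) (hAsym : A ∈ symSub ℂ V)
    (hA0 : A ≠ 0) : IsRealRep ρ := by
  haveI : Nontrivial V := hirr.1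
  have hbij := bijective_of_mem_ne_zero hirr hA hA0
  set e : Dual ℂ V ≃ₗ[ℂ] V := LinearEquiv.ofBijective A hbij with hedef
  have hTA : ∀ φ : Dual ℂ V, e.symm (A φ) = φ := fun φ => e.symm_apply_apply φ
  have hAT : ∀ v : V, A (e.symm v) = v := fun v => e.apply_symm_apply v
  have hmul2 : ∀ (g h : G) (v : V), ρ g (ρ h v) = ρ (g * h) v := by
    intro g h v
    rw [map_mul]
    rfl
  have hTsymm : ∀ v w : V, e.symm v w = e.symm w v := by
    intro v w
    have h := mem_symSub.mp hAsym (e.symm v) (e.symm w)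
    rwa [hAT, hAT] at h
  set n := finrank ℂ V with hn
  set b : Basis (Fin n) ℂ V := finBasis ℂ V with hbdef
  -- the averaged invariant inner product, as a map `V → Dual V`
  set Q : V → Dual ℂ V := fun v => ∑ g : G, ∑ i : Fin n,
      ((starRingEnd ℂ) ((b.coord i) (ρ g v))) • (b.coord i ∘ₗ ρ g) with hQdef
  have hQapp : ∀ v w : V, Q v w = ∑ g : G, ∑ i : Fin n,
      (starRingEnd ℂ) (b.repr (ρ g v) i) * b.repr (ρ g w) i := by
    intro v w
    simp [hQdef, LinearMap.sum_apply, Basis.coord_apply, smul_eq_mul]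
  have hQadd : ∀ v w : V, Q (v + w) = Q v + Q w := by
    intro v w
    simp [hQdef, map_add, add_smul, Finset.sum_add_distrib]
  have hQsmul : ∀ (a : ℂ) (v : V), Q (a • v) = (starRingEnd ℂ) a • Q v := by
    intro a v
    simp [hQdef, map_smul, smul_eq_mul, map_mul, mul_smul, Finset.smul_sum]
  have hQequiv : ∀ (g : G) (v : V), Q (ρ g v) = dR ρ g (Q v) := by
    intro g v
    ext w
    have h1 : dR ρ g (Q v) w = Q v (ρ g⁻¹ w) := rfl
    rw [h1, hQapp, hQapp]
    refine Fintype.sum_equiv (Equiv.mulRight g) _ _ fun h => ?_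
    simp only [Equiv.coe_mulRight]
    refine Finset.sum_congr rfl fun i _ => ?_
    rw [hmul2 h g v, hmul2 (h * g) g⁻¹ w, mul_assoc, mul_inv_cancel, mul_one]
  -- positivity of the inner product
  have hPvv : ∀ v : V, v ≠ 0 → 0 < (Q v v).re ∧ (Q v v).im = 0 := by
    intro v hv
    have hPexp : Q v v
        = ((∑ g : G, ∑ i : Fin n, Complex.normSq (b.repr (ρ g v) i) : ℝ) : ℂ) := by
      rw [hQapp]
      push_cast
      exact Finset.sum_congr rfl fun g _ => Finset.sum_congr rfl fun i _ =>
        Complex.normSq_eq_conj_mul_self.symm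
    have hnonneg : ∀ g : G, 0 ≤ ∑ i : Fin n, Complex.normSq (b.repr (ρ g v) i) :=
      fun g => Finset.sum_nonneg fun i _ => Complex.normSq_nonneg _
    have h1pos : 0 < ∑ i : Fin n, Complex.normSq (b.repr (ρ (1 : G) v) i) := by
      obtain ⟨i₁, hi₁⟩ : ∃ i, b.repr v i ≠ 0 := by
        by_contra hall
        push_neg at hall
        exact hv ((LinearEquiv.map_eq_zero_iff _).mp (DFunLike.ext _ _ hall))
      rw [map_one]
      refine Finset.sum_pos' (fun i _ => Complex.normSq_nonneg _)
        ⟨i₁, Finset.mem_univ _, ?_⟩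
      simpa [Module.End.one_apply, Complex.normSq_pos] using hi₁
    have hsumpos : 0 < ∑ g : G, ∑ i : Fin n, Complex.normSq (b.repr (ρ g v) i) :=
      lt_of_lt_of_le h1pos (Finset.single_le_sum (fun g _ => hnonneg g) (Finset.mem_univ 1))
    rw [hPexp]
    exact ⟨by simpa using hsumpos, by simp⟩
  -- the antilinear operator J
  set J : V → V := fun v => A (Q v) with hJdef
  have hJadd : ∀ v w : V, J (v + w) = J v + J w := by
    intro v w
    show A (Q (v + w)) = A (Q v) + A (Q w)
    rw [hQadd, map_add]
  have hJsmul : ∀ (a : ℂ) (v : V), J (a • v) = (starRingEnd ℂ) a • J v := by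
    intro a v
    show A (Q (a • v)) = (starRingEnd ℂ) a • A (Q v)
    rw [hQsmul, map_smul]
  have hJequiv : ∀ (g : G) (v : V), J (ρ g v) = ρ g (J v) := by
    intro g v
    show A (Q (ρ g v)) = ρ g (A (Q v))
    rw [hQequiv]
    have h2 := LinearMap.congr_fun (hA g) (Q v)
    simpa using h2
  have hkey : ∀ v : V, e.symm (J v) = Q v := fun v => hTA (Q v)
  have hJinj : ∀ v : V, J v = 0 → v = 0 := by
    intro v hzero
    have h1 : Q v = 0 := by
      apply hbij.1
      rw [map_zero]
      exact hzero
    by_contra hne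
    have h2 := (hPvv v hne).1
    have h3 : Q v v = 0 := by rw [h1]; rfl
    rw [h3] at h2
    simp at h2
  -- J² is a positive real scalar, by Schur
  set K : V →ₗ[ℂ] V :=
    { toFun := fun v => J (J v)
      map_add' := fun v w => by simp only [hJadd]
      map_smul' := fun a v => by
        simp only [hJsmul, RingHom.id_apply, Complex.conj_conj] }
    with hKdef
  have hKcomm : ∀ g : G, K ∘ₗ ρ g = ρ g ∘ₗ K := by
    intro g
    ext v
    show J (J (ρ g v)) = ρ g (J (J v))
    rw [hJequiv, hJequiv]
  obtain ⟨c, hc⟩ := schur_endo hirr K hKcomm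
  have hcJ : ∀ v : V, J (J v) = c • v := hc
  obtain ⟨v₀, hv₀⟩ := exists_ne (0 : V)
  have hqc : Q (J v₀) (J v₀) = c * Q v₀ v₀ := by
    calc Q (J v₀) (J v₀) = (e.symm (J (J v₀))) (J v₀) := by rw [hkey]
      _ = (e.symm (c • v₀)) (J v₀) := by rw [hcJ]
      _ = c * ((e.symm v₀) (J v₀)) := by rw [map_smul]; rfl
      _ = c * ((e.symm (J v₀)) v₀) := by rw [hTsymm]
      _ = c * (Q v₀ v₀) := by rw [hkey]
  have hp := hPvv v₀ hv₀
  have hq := hPvv (J v₀) (fun h => hv₀ (hJinj _ h))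
  have hcim : c.im = 0 := by
    have h2 : (Q (J v₀) (J v₀)).im = c.im * (Q v₀ v₀).re := by
      rw [hqc, Complex.mul_im, hp.2, mul_zero, zero_add]
    have h3 : c.im * (Q v₀ v₀).re = 0 := by rw [← h2, hq.2]
    rcases mul_eq_zero.mp h3 with h | h
    · exact h
    · exact absurd h hp.1.ne'
  have hcre : 0 < c.re := by
    have h1 : (Q (J v₀) (J v₀)).re = c.re * (Q v₀ v₀).re := by
      rw [hqc, Complex.mul_re, hp.2, mul_zero, sub_zero]
    have h5 : 0 < c.re * (Q v₀ v₀).re := by rw [← h1]; exact hq.1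
    by_contra hle
    push_neg at hle
    nlinarith [hp.1]
  -- normalize J to get an involution σ
  set r : ℝ := Real.sqrt c.re with hrdef
  have hr : 0 < r := Real.sqrt_pos.mpr hcre
  have hr2 : r * r = c.re := Real.mul_self_sqrt hcre.le
  have hrC : ((r : ℂ)) ≠ 0 := by
    simpa using hr.ne'
  set σ : V → V := fun v => ((r : ℂ))⁻¹ • J v with hσdef
  have hσadd : ∀ v w : V, σ (v + w) = σ v + σ w := by
    intro v w
    show ((r : ℂ))⁻¹ • J (v + w) = _
    rw [hJadd, smul_add]
  have hσsmul : ∀ (a : ℂ) (v : V), σ (a • v) = (starRingEnd ℂ) a • σ v := by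
    intro a v
    show ((r : ℂ))⁻¹ • J (a • v) = (starRingEnd ℂ) a • (((r : ℂ))⁻¹ • J v)
    rw [hJsmul, smul_comm]
  have hσequiv : ∀ (g : G) (v : V), σ (ρ g v) = ρ g (σ v) := by
    intro g v
    show ((r : ℂ))⁻¹ • J (ρ g v) = ρ g (((r : ℂ))⁻¹ • J v)
    rw [hJequiv, map_smul]
  have hσσ : ∀ v : V, σ (σ v) = v := by
    intro v
    show ((r : ℂ))⁻¹ • J (((r : ℂ))⁻¹ • J v) = v
    rw [hJsmul, hcJ, smul_smul, smul_smul]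
    have hconj : (starRingEnd ℂ) (((r : ℂ))⁻¹) = ((r : ℂ))⁻¹ := by
      rw [map_inv₀, Complex.conj_ofReal]
    rw [hconj]
    have hcc : ((r : ℂ)) * ((r : ℂ)) = c := by
      rw [← Complex.ofReal_mul, hr2]
      exact Complex.ext (by simp) (by simp [hcim])
    have hscal : ((r : ℂ))⁻¹ * ((r : ℂ))⁻¹ * c = 1 := by
      rw [← hcc]
      field_simp
    rw [hscal, one_smul]
  -- the real points span, giving a real basis
  set U : Set V := {v | σ v = v} with hUdef
  have hspanU : Submodule.span ℂ U = ⊤ := by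
    rw [Submodule.eq_top_iff']
    intro v
    have hu₁ : v + σ v ∈ U := by
      show σ (v + σ v) = v + σ v
      rw [hσadd, hσσ, add_comm]
    have hu₂ : Complex.I • (v - σ v) ∈ U := by
      show σ (Complex.I • (v - σ v)) = Complex.I • (v - σ v)
      rw [hσsmul, Complex.conj_I]
      have hσsub : σ (v - σ v) = σ v - v := by
        have h1 : σ (v - σ v + σ v) = σ (v - σ v) + σ (σ v) := hσadd _ _
        rw [sub_add_cancel, hσσ] at h1
        have h2 : σ (v - σ v) = σ v - v := by
          have := h1
          rw [eq_comm, add_comm] at this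
          linear_combination (norm := module) this
        exact h2
      rw [hσsub]
      module
    have hv : v = (2⁻¹ : ℂ) • (v + σ v)
        + (-(2⁻¹) * Complex.I) • (Complex.I • (v - σ v)) := by
      rw [smul_smul]
      have hsc : -(2⁻¹) * Complex.I * Complex.I = (2⁻¹ : ℂ) := by
        rw [mul_assoc, Complex.I_mul_I]
        ring
      rw [hsc]
      module
    rw [hv]
    exact Submodule.add_mem _ (Submodule.smul_mem _ _ (Submodule.subset_span hu₁))
      (Submodule.smul_mem _ _ (Submodule.subset_span hu₂))
  obtain ⟨s, hsU, hspan, hli⟩ := exists_linearIndependent ℂ U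
  rw [hspanU] at hspan
  haveI : Fintype s := hli.setFinite.fintype
  set c0 : Basis s ℂ V := Basis.mk hli (by rw [Subtype.range_coe, hspan]) with hc0
  set m := Fintype.card s with hm
  set cb : Basis (Fin m) ℂ V := c0.reindex (Fintype.equivFin s) with hcb
  have hcbU : ∀ j, σ (cb j) = cb j := by
    intro j
    have h1 : cb j = (((Fintype.equivFin s).symm j : s) : V) := by
      rw [hcb, Module.Basis.reindex_apply, hc0, Basis.coe_mk]
    rw [h1]
    exact hsU ((Fintype.equivFin s).symm j).2
  refine ⟨m, cb, ?_⟩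
  intro g i j
  set x := ρ g (cb j) with hx
  have hfix : σ x = x := by rw [hx, hσequiv, hcbU]
  have hsum : ∑ k, cb.repr x k • cb k = x := cb.sum_repr x
  set σh : V →+ V := AddMonoidHom.mk' σ hσadd with hσh
  have hσx : σ x = ∑ k, (starRingEnd ℂ) (cb.repr x k) • cb k := by
    conv_lhs => rw [← hsum]
    have h2 : σ (∑ k, cb.repr x k • cb k) = ∑ k, σ (cb.repr x k • cb k) :=
      map_sum σh _ _
    rw [h2]
    exact Finset.sum_congr rfl fun k _ => by rw [hσsmul, hcbU]
  have h4 : (∑ k, (starRingEnd ℂ) (cb.repr x k) • cb k) = x := by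
    rw [← hσx, hfix]
  have h3 := cb.repr_sum_self fun k => (starRingEnd ℂ) (cb.repr x k)
  rw [h4] at h3
  have h6 := congrArg Complex.im (congrFun h3 i)
  rw [Complex.conj_im] at h6
  have h5 : (cb.repr x i).im = 0 := by linarith
  rw [LinearMap.toMatrix_apply]
  exact h5

end FSAux

/-- For an irreducible finite-dimensional complex representation `ρ`
of a finite group `G`, the Frobenius–Schur number `C(ρ)` (taken with respect to the
inversion anti-automorphism, so that `ρ^τ` is the conjugate/dual representation)
equals `1` if `ρ` is real, `0` if `ρ` is complex, and `-1` if `ρ` is quaternionic. -/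
theorem FS_number_real_complex_quaternionic
    {G : Type*} [Group G] [Fintype G]
    {V : Type*} [AddCommGroup V] [Module ℂ V] [FiniteDimensional ℂ V]
    (ρ : Representation ℂ G V) (hirr : CST.IsIrreducible ρ) :
    (CST.IsRealRep ρ →
      CST.FSnum ρ (fun g => g⁻¹) (fun a b => mul_inv_rev a b) = 1) ∧
    (¬ CST.RepEquiv (CST.tauConj ρ (fun g => g⁻¹) (fun a b => mul_inv_rev a b)) ρ →
      CST.FSnum ρ (fun g => g⁻¹) (fun a b => mul_inv_rev a b) = 0) ∧
    ((CST.RepEquiv (CST.tauConj ρ (fun g => g⁻¹) (fun a b => mul_inv_rev a b)) ρ ∧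
        ¬ CST.IsRealRep ρ) →
      CST.FSnum ρ (fun g => g⁻¹) (fun a b => mul_inv_rev a b) = -1) := by
  classical
  have hsplit := FSAux.finrank_split (G := G) ρ
  have hle := FSAux.finrank_hom_le_one hirr
  have hFS : CST.FSnum ρ (fun g => g⁻¹) (fun a b => mul_inv_rev a b)
      = (Module.finrank ℂ ↥(CST.repHom (FSAux.dR ρ) ρ ⊓ CST.symSub ℂ V) : ℤ)
        - (Module.finrank ℂ ↥(CST.repHom (FSAux.dR ρ) ρ ⊓ CST.skewSub ℂ V) : ℤ) := rfl
  refine ⟨?_, ?_, ?_⟩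
  · -- real case
    intro hreal
    obtain ⟨A, hAmem, hA0⟩ := FSAux.exists_sym_of_real hirr hreal
    have h1 : (ℂ ∙ A) ≤ CST.repHom (FSAux.dR ρ) ρ ⊓ CST.symSub ℂ V :=
      (Submodule.span_singleton_le_iff_mem A _).mpr hAmem
    have h2 : 1 ≤ Module.finrank ℂ ↥(CST.repHom (FSAux.dR ρ) ρ ⊓ CST.symSub ℂ V) := by
      calc 1 = Module.finrank ℂ ↥(ℂ ∙ A) := (finrank_span_singleton hA0).symm
        _ ≤ _ := Submodule.finrank_mono h1
    have hs1 : Module.finrank ℂ ↥(CST.repHom (FSAux.dR ρ) ρ ⊓ CST.symSub ℂ V) = 1 := by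
      omega
    have hk0 : Module.finrank ℂ ↥(CST.repHom (FSAux.dR ρ) ρ ⊓ CST.skewSub ℂ V) = 0 := by
      omega
    rw [hFS, hs1, hk0]
    norm_num
  · -- complex case
    intro hnequiv
    have hbot : CST.repHom (FSAux.dR ρ) ρ = ⊥ := by
      by_contra h
      obtain ⟨B, hB, hB0⟩ := Submodule.exists_mem_ne_zero_of_ne_bot h
      have hbij := FSAux.bijective_of_mem_ne_zero hirr hB hB0
      apply hnequiv
      refine ⟨LinearEquiv.ofBijective B hbij, ?_⟩
      intro g φ
      have h2 := LinearMap.congr_fun (hB g) φ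
      simpa using h2
    have hp0 : Module.finrank ℂ ↥(CST.repHom (FSAux.dR ρ) ρ ⊓ CST.symSub ℂ V) = 0 := by
      have hpb : CST.repHom (FSAux.dR ρ) ρ ⊓ CST.symSub ℂ V = ⊥ :=
        le_bot_iff.mp (inf_le_left.trans hbot.le)
      rw [hpb, finrank_bot]
    have hq0 : Module.finrank ℂ ↥(CST.repHom (FSAux.dR ρ) ρ ⊓ CST.skewSub ℂ V) = 0 := by
      have hqb : CST.repHom (FSAux.dR ρ) ρ ⊓ CST.skewSub ℂ V = ⊥ :=
        le_bot_iff.mp (inf_le_left.trans hbot.le)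
      rw [hqb, finrank_bot]
    rw [hFS, hp0, hq0]
    norm_num
  · -- quaternionic case
    rintro ⟨⟨eqv, heqv⟩, hnotreal⟩
    haveI : Nontrivial V := hirr.1
    have hB : (eqv : Module.Dual ℂ V →ₗ[ℂ] V) ∈ CST.repHom (FSAux.dR ρ) ρ := by
      intro g
      ext φ
      simp only [LinearMap.comp_apply, LinearEquiv.coe_coe]
      exact heqv g φ
    have hB0 : (eqv : Module.Dual ℂ V →ₗ[ℂ] V) ≠ 0 := by
      intro h0
      obtain ⟨v, hv⟩ := exists_ne (0 : V)
      apply hv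
      calc v = eqv (eqv.symm v) := (eqv.apply_symm_apply v).symm
        _ = (eqv : Module.Dual ℂ V →ₗ[ℂ] V) (eqv.symm v) := rfl
        _ = 0 := by rw [h0]; rfl
    have h1 : (ℂ ∙ (eqv : Module.Dual ℂ V →ₗ[ℂ] V)) ≤ CST.repHom (FSAux.dR ρ) ρ :=
      (Submodule.span_singleton_le_iff_mem _ _).mpr hB
    have h2 : 1 ≤ Module.finrank ℂ ↥(CST.repHom (FSAux.dR ρ) ρ) := by
      calc 1 = Module.finrank ℂ ↥(ℂ ∙ (eqv : Module.Dual ℂ V →ₗ[ℂ] V)) :=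
            (finrank_span_singleton hB0).symm
        _ ≤ _ := Submodule.finrank_mono h1
    have hp0 : Module.finrank ℂ ↥(CST.repHom (FSAux.dR ρ) ρ ⊓ CST.symSub ℂ V) = 0 := by
      by_contra hne
      have hpbot : CST.repHom (FSAux.dR ρ) ρ ⊓ CST.symSub ℂ V ≠ ⊥ := by
        intro h
        rw [h, finrank_bot] at hne
        exact hne rfl
      obtain ⟨A', hA', hA'0⟩ := Submodule.exists_mem_ne_zero_of_ne_bot hpbot
      rw [Submodule.mem_inf] at hA'
      exact hnotreal (FSAux.isReal_of_sym hirr hA'.1 hA'.2 hA'0)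
    have hq1 : Module.finrank ℂ ↥(CST.repHom (FSAux.dR ρ) ρ ⊓ CST.skewSub ℂ V) = 1 := by
      omega
    rw [hFS, hp0, hq1]
    norm_num
end

section
/- Let G be a finite group, τ : G → G an involutory anti-automorphism, and K ≤ G a τ-invariant subgroup (τ(K) = K). Let (σ,V) be a finite-dimensional complex representation of K. Then the linear map ξ : Ind_K^G V′ → (Ind_K^G V)′ defined by (ξF′)(F) = (1/|K|) Σ_{g∈G} F′(g)(F(τ(g⁻¹))) is a bijective intertwiner, establishing the equivalence Ind_K^G(σ^τ) ∼ (Ind_K^G σ)^τ of G-representations. -/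
open Module

section IndTauAux

set_option linter.unusedSectionVars false

open CST

variable {G : Type*} [Group G] [Fintype G]
variable {V : Type*} [AddCommGroup V] [Module ℂ V]

theorem tau_one' {τ : G → G} (hmul : ∀ a b : G, τ (a * b) = τ b * τ a) : τ 1 = 1 := by
  have h0 : τ 1 = τ 1 * τ 1 := by simpa using hmul 1 1
  have h2 : τ 1 * 1 = τ 1 * τ 1 := by rw [mul_one]; exact h0
  exact (mul_left_cancel h2).symm

theorem tau_inv' {τ : G → G} (hmul : ∀ a b : G, τ (a * b) = τ b * τ a) (g : G) :
    τ g⁻¹ = (τ g)⁻¹ := by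
  refine eq_inv_of_mul_eq_one_left ?_
  rw [← hmul, mul_inv_cancel, tau_one' hmul]

open Classical in
/-- The "delta" element of the induced representation supported on `hK`,
with value `σ(g⁻¹h) v` at `g ∈ hK`. -/
noncomputable def IndE (K : Subgroup G) (σ : Representation ℂ K V) (h : G) :
    V →ₗ[ℂ] ↥(CST.indCarrier K σ) where
  toFun v := ⟨fun g => if hg : g⁻¹ * h ∈ K then σ (⟨g⁻¹ * h, hg⟩ : K) v else 0, by
    intro g x
    dsimp only
    by_cases hg : g⁻¹ * h ∈ K
    · have hgx : (g * (x : G))⁻¹ * h ∈ K := by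
        have e : (g * (x : G))⁻¹ * h = (x : G)⁻¹ * (g⁻¹ * h) := by group
        rw [e]; exact K.mul_mem (K.inv_mem x.2) hg
      rw [dif_pos hgx, dif_pos hg]
      have e2 : (⟨(g * (x : G))⁻¹ * h, hgx⟩ : K) = x⁻¹ * (⟨g⁻¹ * h, hg⟩ : K) := by
        ext; push_cast; group
      rw [e2, map_mul, Module.End.mul_apply]
    · have hgx : ¬ ((g * (x : G))⁻¹ * h ∈ K) := by
        intro hmem
        apply hg
        have e : g⁻¹ * h = (x : G) * ((g * (x : G))⁻¹ * h) := by group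
        rw [e]; exact K.mul_mem x.2 hmem
      rw [dif_neg hgx, dif_neg hg, map_zero]⟩
  map_add' v w := Subtype.ext (funext fun g => by
    by_cases hg : g⁻¹ * h ∈ K <;> simp [hg])
  map_smul' c v := Subtype.ext (funext fun g => by
    by_cases hg : g⁻¹ * h ∈ K <;> simp [hg])

theorem IndE_apply_pos {K : Subgroup G} {σ : Representation ℂ K V} {h : G} (v : V)
    {g : G} (hg : g⁻¹ * h ∈ K) :
    (IndE K σ h v).1 g = σ (⟨g⁻¹ * h, hg⟩ : K) v := by
  simp only [IndE, LinearMap.coe_mk, AddHom.coe_mk]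
  rw [dif_pos hg]

theorem IndE_apply_neg {K : Subgroup G} {σ : Representation ℂ K V} {h : G} (v : V)
    {g : G} (hg : ¬ (g⁻¹ * h ∈ K)) :
    (IndE K σ h v).1 g = 0 := by
  simp only [IndE, LinearMap.coe_mk, AddHom.coe_mk]
  rw [dif_neg hg]

theorem IndE_mul {K : Subgroup G} {σ : Representation ℂ K V} (h : G) (x : K) (v : V) :
    IndE K σ (h * x) v = IndE K σ h (σ x v) := by
  apply Subtype.ext
  funext g
  by_cases hg : g⁻¹ * h ∈ K
  · have hg2 : g⁻¹ * (h * x) ∈ K := by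
      rw [← mul_assoc]; exact K.mul_mem hg x.2
    rw [IndE_apply_pos v hg2, IndE_apply_pos (σ x v) hg]
    have e2 : (⟨g⁻¹ * (h * x), hg2⟩ : K) = (⟨g⁻¹ * h, hg⟩ : K) * x := by
      ext; push_cast; group
    rw [e2, map_mul, Module.End.mul_apply]
  · have hg2 : ¬ (g⁻¹ * (h * x) ∈ K) := by
      intro hmem
      apply hg
      have e : g⁻¹ * h = (g⁻¹ * (h * x)) * (x : G)⁻¹ := by group
      rw [e]; exact K.mul_mem hmem (K.inv_mem x.2)
    rw [IndE_apply_neg v hg2, IndE_apply_neg (σ x v) hg]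

theorem natCard_ne_zero' (K : Subgroup G) : ((Nat.card K : ℂ)) ≠ 0 := by
  exact_mod_cast (Nat.card_pos (α := K)).ne'

open Classical in
theorem card_filter_mem (K : Subgroup G) :
    (Finset.univ.filter (fun a : G => a ∈ K)).card = Nat.card K := by
  rw [Nat.card_eq_fintype_card, Fintype.card_subtype]

open Classical in
theorem sum_ite_mem_const {M : Type*} [AddCommMonoid M] (K : Subgroup G) (c : M) :
    ∑ a : G, (if a ∈ K then c else 0) = (Nat.card K) • c := by
  rw [← Finset.sum_filter, Finset.sum_const, card_filter_mem]

open Classical in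
/-- Decomposition of an element of the induced representation into deltas. -/
theorem IndF_decomp {K : Subgroup G} {σ : Representation ℂ K V}
    (F : ↥(CST.indCarrier K σ)) :
    (Nat.card K : ℂ)⁻¹ • ∑ h : G, IndE K σ h (F.1 h) = F := by
  apply Subtype.ext
  funext g
  have hcoe : ((∑ h : G, IndE K σ h (F.1 h) : ↥(CST.indCarrier K σ)) : G → V)
      = ∑ h : G, ((IndE K σ h (F.1 h) : ↥(CST.indCarrier K σ)) : G → V) := by
    exact map_sum (CST.indCarrier K σ).subtype _ _
  have key : ∀ b : G, (IndE K σ (g * b) (F.1 (g * b))).1 g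
      = (if b ∈ K then F.1 g else 0) := by
    intro b
    by_cases hb : b ∈ K
    · have hg : g⁻¹ * (g * b) ∈ K := by rwa [inv_mul_cancel_left]
      rw [IndE_apply_pos _ hg, if_pos hb]
      have e2 : (⟨g⁻¹ * (g * b), hg⟩ : K) = (⟨b, hb⟩ : K) := by
        ext; simp
      rw [e2]
      have hF := F.2 g (⟨b, hb⟩ : K)
      rw [hF]
      have : σ (⟨b, hb⟩ : K) (σ (⟨b, hb⟩ : K)⁻¹ (F.1 g))
          = (σ ((⟨b, hb⟩ : K) * (⟨b, hb⟩ : K)⁻¹)) (F.1 g) := by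
        rw [map_mul, Module.End.mul_apply]
      rw [this, mul_inv_cancel, map_one, Module.End.one_apply]
    · have hg : ¬ (g⁻¹ * (g * b) ∈ K) := by rwa [inv_mul_cancel_left]
      rw [IndE_apply_neg _ hg, if_neg hb]
  have hsum : ∑ h : G, (IndE K σ h (F.1 h)).1 g = (Nat.card K) • F.1 g := by
    rw [← sum_ite_mem_const K (F.1 g)]
    exact (Fintype.sum_bijective (fun b : G => g * b) (Equiv.mulLeft g).bijective
      (fun b => if b ∈ K then F.1 g else 0)
      (fun h : G => (IndE K σ h (F.1 h)).1 g)
      (fun b => (key b).symm)).symm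
  calc ((Nat.card K : ℂ)⁻¹ • ∑ h : G, IndE K σ h (F.1 h) :
        ↥(CST.indCarrier K σ)).1 g
      = (Nat.card K : ℂ)⁻¹ • (∑ h : G, (IndE K σ h (F.1 h)).1 g) := by
        rw [Submodule.coe_smul, hcoe]
        simp [Finset.sum_apply]
    _ = (Nat.card K : ℂ)⁻¹ • ((Nat.card K) • F.1 g) := by rw [hsum]
    _ = F.1 g := by
        rw [← Nat.cast_smul_eq_nsmul ℂ, smul_smul,
          inv_mul_cancel₀ (natCard_ne_zero' K), one_smul]

variable {K : Subgroup G} {σ : Representation ℂ K V}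
variable {τ : G → G} (hmul : ∀ a b : G, τ (a * b) = τ b * τ a)
  (hinv : ∀ g : G, τ (τ g) = g)
  (hK : ∀ g : G, g ∈ K ↔ τ g ∈ K)
  (τK : K → K) (hτK : ∀ x : K, (τK x : G) = τ x)
  (hmulK : ∀ a b : K, τK (a * b) = τK b * τK a)

open Classical in
include hmul hinv hK hτK hmulK in
theorem xi_E_eval (F' : ↥(CST.indCarrier K (CST.tauConj σ τK hmulK))) (h : G) (v : V) :
    (Nat.card K : ℂ)⁻¹ * ∑ g : G, F'.1 g ((IndE K σ h v).1 (τ g⁻¹))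
      = F'.1 (τ h)⁻¹ v := by
  have key : ∀ a : G, F'.1 ((τ h)⁻¹ * a) ((IndE K σ h v).1 (τ ((τ h)⁻¹ * a)⁻¹))
      = (if a ∈ K then F'.1 (τ h)⁻¹ v else 0) := by
    intro a
    have e1 : τ (((τ h)⁻¹ * a)⁻¹) = h * (τ a)⁻¹ := by
      rw [mul_inv_rev, inv_inv, hmul, hinv, tau_inv' hmul]
    rw [e1]
    by_cases ha : a ∈ K
    · have hτa : (h * (τ a)⁻¹)⁻¹ * h ∈ K := by
        have e2 : (h * (τ a)⁻¹)⁻¹ * h = τ a := by group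
        rw [e2]; exact (hK a).1 ha
      rw [if_pos ha, IndE_apply_pos v hτa]
      set x : K := ⟨a, ha⟩ with hx
      have e3 : (⟨(h * (τ a)⁻¹)⁻¹ * h, hτa⟩ : K) = τK x := by
        ext; rw [hτK]; group; rfl
      rw [e3]
      have hF := F'.2 (τ h)⁻¹ x
      have ha2 : ((τ h)⁻¹ * a) = ((τ h)⁻¹ * (x : G)) := rfl
      rw [ha2, hF]
      have htc : (CST.tauConj σ τK hmulK) x⁻¹ (F'.1 (τ h)⁻¹)
          = (F'.1 (τ h)⁻¹) ∘ₗ σ (τK x⁻¹) := rfl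
      rw [htc]
      have hτKone : τK 1 = 1 := by
        have h0 : τK 1 = τK 1 * τK 1 := by simpa using hmulK 1 1
        have h2 : τK 1 * 1 = τK 1 * τK 1 := by rw [mul_one]; exact h0
        exact (mul_left_cancel h2).symm
      have hτKinv : τK x⁻¹ = (τK x)⁻¹ := by
        refine eq_inv_of_mul_eq_one_left ?_
        rw [← hmulK, mul_inv_cancel, hτKone]
      simp only [LinearMap.comp_apply]
      rw [hτKinv]
      have : σ (τK x)⁻¹ (σ (τK x) v) = σ ((τK x)⁻¹ * τK x) v := by
        rw [map_mul, Module.End.mul_apply]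
      rw [this, inv_mul_cancel, map_one, Module.End.one_apply]
    · have hτa : ¬ ((h * (τ a)⁻¹)⁻¹ * h ∈ K) := by
        have e2 : (h * (τ a)⁻¹)⁻¹ * h = τ a := by group
        rw [e2]
        intro hmem
        exact ha ((hK a).2 hmem)
      rw [if_neg ha, IndE_apply_neg v hτa, map_zero]
  have hsum : ∑ g : G, F'.1 g ((IndE K σ h v).1 (τ g⁻¹))
      = (Nat.card K) • (F'.1 (τ h)⁻¹ v) := by
    rw [← sum_ite_mem_const K (F'.1 (τ h)⁻¹ v)]
    exact (Fintype.sum_bijective (fun a : G => (τ h)⁻¹ * a)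
      (Equiv.mulLeft ((τ h)⁻¹)).bijective
      (fun a => if a ∈ K then F'.1 (τ h)⁻¹ v else 0)
      (fun g : G => F'.1 g ((IndE K σ h v).1 (τ g⁻¹)))
      (fun a => (key a).symm)).symm
  rw [hsum, nsmul_eq_mul, ← mul_assoc, inv_mul_cancel₀ (natCard_ne_zero' K), one_mul]

include hmul hinv hK hτK hmulK in
theorem indEta_mem (L : Module.Dual ℂ ↥(CST.indCarrier K σ)) :
    (fun g : G => L ∘ₗ IndE K σ (τ g)⁻¹) ∈ CST.indCarrier K (CST.tauConj σ τK hmulK) := by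
  intro g x
  have e1 : (τ (g * x))⁻¹ = (τ g)⁻¹ * ((τK x⁻¹ : K) : G) := by
    simp only [hτK, InvMemClass.coe_inv, tau_inv' hmul, hmul, mul_inv_rev]
  ext v
  simp only [LinearMap.comp_apply]
  rw [e1]
  have e2 : IndE K σ ((τ g)⁻¹ * ((τK x⁻¹ : K) : G)) v
      = IndE K σ (τ g)⁻¹ (σ (τK x⁻¹) v) := IndE_mul _ _ _
  rw [e2]
  rfl

/-- The map `ξ` as a linear map. -/
noncomputable def IndXi :
    ↥(CST.indCarrier K (CST.tauConj σ τK hmulK)) →ₗ[ℂ]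
      Module.Dual ℂ ↥(CST.indCarrier K σ) where
  toFun F' :=
    { toFun := fun F => (Nat.card K : ℂ)⁻¹ * ∑ g : G, F'.1 g (F.1 (τ g⁻¹))
      map_add' := fun F₁ F₂ => by
        simp only [Submodule.coe_add, Pi.add_apply, map_add]
        rw [Finset.sum_add_distrib, mul_add]
      map_smul' := fun c F => by
        simp only [Submodule.coe_smul, Pi.smul_apply, map_smul, smul_eq_mul,
          RingHom.id_apply, ← Finset.mul_sum]
        ring }
  map_add' F₁' F₂' := by
    ext F
    simp only [Submodule.coe_add, Pi.add_apply, LinearMap.coe_mk, AddHom.coe_mk,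
      LinearMap.add_apply]
    rw [Finset.sum_add_distrib, mul_add]
  map_smul' c F' := by
    ext F
    simp only [Submodule.coe_smul, Pi.smul_apply, LinearMap.coe_mk, AddHom.coe_mk,
      LinearMap.smul_apply, smul_eq_mul, RingHom.id_apply, ← Finset.mul_sum]
    ring

/-- The inverse map `η`. -/
noncomputable def IndEta :
    Module.Dual ℂ ↥(CST.indCarrier K σ) →ₗ[ℂ]
      ↥(CST.indCarrier K (CST.tauConj σ τK hmulK)) where
  toFun L := ⟨fun g : G => L ∘ₗ IndE K σ (τ g)⁻¹,
    indEta_mem hmul hinv hK τK hτK hmulK L⟩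
  map_add' L₁ L₂ := by
    apply Subtype.ext
    funext g
    simp [LinearMap.add_comp]
  map_smul' c L := by
    apply Subtype.ext
    funext g
    simp [LinearMap.smul_comp]

include hinv hK in
theorem eta_xi (F' : ↥(CST.indCarrier K (CST.tauConj σ τK hmulK))) :
    IndEta hmul hinv hK τK hτK hmulK
      (IndXi (σ := σ) (τ := τ) (τK := τK) (hmulK := hmulK) F') = F' := by
  apply Subtype.ext
  funext g
  ext v
  show (Nat.card K : ℂ)⁻¹ * ∑ g' : G, F'.1 g' ((IndE K σ (τ g)⁻¹ v).1 (τ g'⁻¹))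
      = F'.1 g v
  rw [xi_E_eval hmul hinv hK τK hτK hmulK]
  have : (τ ((τ g)⁻¹))⁻¹ = g := by rw [tau_inv' hmul, hinv, inv_inv]
  rw [this]

include hinv hK in
theorem xi_eta (L : Module.Dual ℂ ↥(CST.indCarrier K σ)) :
    IndXi (σ := σ) (τ := τ) (τK := τK) (hmulK := hmulK)
      (IndEta hmul hinv hK τK hτK hmulK L) = L := by
  ext F
  show (Nat.card K : ℂ)⁻¹ * ∑ g : G, L (IndE K σ (τ g)⁻¹ (F.1 (τ g⁻¹))) = L F
  have hre : ∀ g : G, L (IndE K σ (τ g)⁻¹ (F.1 (τ g⁻¹)))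
      = L (IndE K σ (τ g)⁻¹ (F.1 ((τ g)⁻¹))) := by
    intro g; rw [tau_inv' hmul]
  have hbij : Function.Bijective (fun g : G => (τ g)⁻¹) := by
    have hinvol : Function.Involutive (fun g : G => (τ g)⁻¹) := by
      intro g
      simp only
      rw [tau_inv' hmul, hinv, inv_inv]
    exact hinvol.bijective
  have hsum : ∑ g : G, L (IndE K σ (τ g)⁻¹ (F.1 ((τ g)⁻¹)))
      = ∑ h : G, L (IndE K σ h (F.1 h)) :=
    Fintype.sum_bijective _ hbij _ _ (fun g => rfl)
  calc (Nat.card K : ℂ)⁻¹ * ∑ g : G, L (IndE K σ (τ g)⁻¹ (F.1 (τ g⁻¹)))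
      = (Nat.card K : ℂ)⁻¹ * ∑ h : G, L (IndE K σ h (F.1 h)) := by
        rw [Finset.sum_congr rfl fun g _ => hre g, hsum]
    _ = L ((Nat.card K : ℂ)⁻¹ • ∑ h : G, IndE K σ h (F.1 h)) := by
        rw [map_smul, ← map_sum, smul_eq_mul]
    _ = L F := by rw [IndF_decomp]

end IndTauAux

/-- For a `τ`-invariant subgroup `K ≤ G` and a representation `σ` of
`K`, the map `ξ : Ind_K^G V′ → (Ind_K^G V)′` given by
`(ξF′)(F) = |K|⁻¹ Σ_{g∈G} F′(g)(F(τ(g⁻¹)))` is a bijective intertwiner giving the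
equivalence `Ind_K^G(σ^τ) ∼ (Ind_K^G σ)^τ`. -/
theorem induced_tau_conjugate
    {G : Type*} [Group G] [Fintype G]
    {V : Type*} [AddCommGroup V] [Module ℂ V]
    (K : Subgroup G) (τ : G → G)
    (hmul : ∀ a b : G, τ (a * b) = τ b * τ a) (hinv : ∀ g : G, τ (τ g) = g)
    (hK : ∀ g : G, g ∈ K ↔ τ g ∈ K)
    (τK : K → K) (hτK : ∀ x : K, (τK x : G) = τ x)
    (hmulK : ∀ a b : K, τK (a * b) = τK b * τK a)
    (σ : Representation ℂ K V) :
    ∃ ξ : ↥(CST.indCarrier K (CST.tauConj σ τK hmulK)) ≃ₗ[ℂ]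
        Module.Dual ℂ ↥(CST.indCarrier K σ),
      (∀ (F' : ↥(CST.indCarrier K (CST.tauConj σ τK hmulK)))
          (F : ↥(CST.indCarrier K σ)),
          ξ F' F = (Nat.card K : ℂ)⁻¹ * ∑ g : G, F'.1 g (F.1 (τ g⁻¹))) ∧
      (∀ (g : G) (F' : ↥(CST.indCarrier K (CST.tauConj σ τK hmulK))),
          ξ (CST.indRep K (CST.tauConj σ τK hmulK) g F') =
            CST.tauConj (CST.indRep K σ) τ hmul g (ξ F')) := by
  refine ⟨LinearEquiv.ofLinear (IndXi (τ := τ) τK hmulK)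
      (IndEta hmul hinv hK τK hτK hmulK) ?_ ?_, ?_, ?_⟩
  · exact LinearMap.ext fun L => xi_eta hmul hinv hK τK hτK hmulK L
  · exact LinearMap.ext fun F' => eta_xi hmul hinv hK τK hτK hmulK F'
  · intro F' F
    rfl
  · intro g F'
    ext F
    show (Nat.card K : ℂ)⁻¹ * ∑ a : G, F'.1 (g⁻¹ * a) (F.1 (τ a⁻¹))
        = (Nat.card K : ℂ)⁻¹ * ∑ a : G, F'.1 a (F.1 ((τ g)⁻¹ * τ a⁻¹))
    congr 1
    refine (Fintype.sum_bijective (fun a : G => g * a) (Equiv.mulLeft g).bijective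
      (fun a => F'.1 a (F.1 ((τ g)⁻¹ * τ a⁻¹)))
      (fun a => F'.1 (g⁻¹ * a) (F.1 (τ a⁻¹))) ?_).symm
    intro a
    have e1 : g⁻¹ * (g * a) = a := by group
    have e2 : τ ((g * a)⁻¹) = (τ g)⁻¹ * τ a⁻¹ := by
      rw [mul_inv_rev, hmul, tau_inv' hmul]
    simp only [e1, e2]
end

section
/- Let G be a finite group, τ an involutory anti-automorphism of G, and K ≤ G a τ-invariant subgroup. Let (ρ,W) be an irreducible representation of G whose restriction to K decomposes multiplicity-free as Res_K^G ρ = σ₁ ⊕ ⋯ ⊕ σ_m with the σ_i irreducible and pairwise inequivalent. If ρ^τ ∼ ρ and σ_i^τ ∼ σ_i for all i, then C_τ(σ_i) = C_τ(ρ) for all i = 1, …, m. -/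
open Module

section Aux

open CST Module

variable {G : Type*} [Group G]

lemma CST.dual_ext' {V : Type*} [AddCommGroup V] [Module ℂ V]
    {v w : V} (h : ∀ φ : Module.Dual ℂ V, φ v = φ w) : v = w := by
  rw [← sub_eq_zero, ← (Module.forall_dual_apply_eq_zero_iff ℂ (v - w))]
  intro φ; simp [h φ, sub_eq_zero]

lemma CST.exists_dual_ne_zero {V : Type*} [AddCommGroup V] [Module ℂ V]
    {v : V} (hv : v ≠ 0) : ∃ φ : Module.Dual ℂ V, φ v ≠ 0 := by
  by_contra h
  push_neg at h
  exact hv ((Module.forall_dual_apply_eq_zero_iff ℂ v).mp h)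

/-- The transpose of an operator `Dual V → V`, as an operator `Dual V → V`. -/
noncomputable def CST.transp {V : Type*} [AddCommGroup V] [Module ℂ V]
    [FiniteDimensional ℂ V] (A : Module.Dual ℂ V →ₗ[ℂ] V) :
    Module.Dual ℂ V →ₗ[ℂ] V :=
  (Module.evalEquiv ℂ V).symm.toLinearMap ∘ₗ A.dualMap

lemma CST.transp_apply {V : Type*} [AddCommGroup V] [Module ℂ V]
    [FiniteDimensional ℂ V] (A : Module.Dual ℂ V →ₗ[ℂ] V)
    (φ ψ : Module.Dual ℂ V) : φ (CST.transp A ψ) = ψ (A φ) := by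
  simp [CST.transp]

lemma CST.mem_repHom_iff {k V₁ V₂ : Type*} [CommRing k] [AddCommGroup V₁] [Module k V₁]
    [AddCommGroup V₂] [Module k V₂] {π₁ : Representation k G V₁}
    {π₂ : Representation k G V₂} {A : V₁ →ₗ[k] V₂} :
    A ∈ repHom π₁ π₂ ↔ ∀ (g : G) (v : V₁), A (π₁ g v) = π₂ g (A v) := by
  constructor
  · intro h g v
    exact LinearMap.congr_fun (h g) v
  · intro h g
    ext v
    exact h g v

lemma CST.mem_symSub_iff {k V : Type*} [CommRing k] [AddCommGroup V] [Module k V]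
    {A : Module.Dual k V →ₗ[k] V} :
    A ∈ symSub k V ↔ ∀ φ ψ : Module.Dual k V, φ (A ψ) = ψ (A φ) := Iff.rfl

lemma CST.mem_skewSub_iff {k V : Type*} [CommRing k] [AddCommGroup V] [Module k V]
    {A : Module.Dual k V →ₗ[k] V} :
    A ∈ skewSub k V ↔ ∀ φ ψ : Module.Dual k V, φ (A ψ) = -ψ (A φ) := Iff.rfl

lemma CST.tauConj_apply {k V : Type*} [CommRing k] [AddCommGroup V] [Module k V]
    (π : Representation k G V) (τ : G → G)
    (hmul : ∀ a b : G, τ (a * b) = τ b * τ a) (g : G) (φ : Module.Dual k V) (v : V) :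
    tauConj π τ hmul g φ v = φ (π (τ g) v) := rfl

lemma CST.transp_mem_repHom {V : Type*} [AddCommGroup V] [Module ℂ V]
    [FiniteDimensional ℂ V] (π : Representation ℂ G V) (τ : G → G)
    (hmul : ∀ a b : G, τ (a * b) = τ b * τ a) (hinv : ∀ g : G, τ (τ g) = g)
    {A : Module.Dual ℂ V →ₗ[ℂ] V} (hA : A ∈ repHom (tauConj π τ hmul) π) :
    CST.transp A ∈ repHom (tauConj π τ hmul) π := by
  rw [CST.mem_repHom_iff] at hA ⊢
  intro g ψ
  apply CST.dual_ext'
  intro φ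
  have h1 : φ (CST.transp A (tauConj π τ hmul g ψ)) = ψ (π (τ g) (A φ)) := by
    rw [CST.transp_apply]
    rfl
  have h2 : A (tauConj π τ hmul (τ g) φ) = π (τ g) (A φ) := hA (τ g) φ
  have h3 : tauConj π τ hmul (τ g) φ = (π g).dualMap φ := by
    show (π (τ (τ g))).dualMap φ = (π g).dualMap φ
    rw [hinv]
  have h4 : φ (π g (CST.transp A ψ)) = ((π g).dualMap φ) (CST.transp A ψ) := rfl
  rw [h1, h4, CST.transp_apply, ← h3, h2]

lemma CST.scalar_of_comm {V : Type*} [AddCommGroup V] [Module ℂ V]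
    [FiniteDimensional ℂ V] (π : Representation ℂ G V) (hirr : IsIrreducible π)
    (f : V →ₗ[ℂ] V) (hf : ∀ (g : G) (v : V), f (π g v) = π g (f v)) :
    ∃ c : ℂ, f = c • LinearMap.id := by
  haveI : Nontrivial V := hirr.1
  obtain ⟨c, hc⟩ := Module.End.exists_eigenvalue (f : Module.End ℂ V)
  obtain ⟨x, hx⟩ := hc.exists_hasEigenvector
  have hxval : f x = c • x := hx.apply_eq_smul
  set N : Submodule ℂ V := LinearMap.ker (f - c • LinearMap.id) with hN
  have hmemN : ∀ v, v ∈ N ↔ f v = c • v := by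
    intro v
    rw [hN, LinearMap.mem_ker]
    constructor
    · intro h
      have := sub_eq_zero.mp (by simpa using h)
      simpa using this
    · intro h
      simp [h]
  have hNinv : ∀ (g : G), ∀ v ∈ N, π g v ∈ N := by
    intro g v hv
    rw [hmemN] at hv ⊢
    rw [hf, hv, map_smul]
  rcases hirr.2 N hNinv with hbot | htop
  · exfalso
    have : x ∈ N := (hmemN x).mpr hxval
    rw [hbot] at this
    exact hx.2 (by simpa using this)
  · refine ⟨c, ?_⟩
    ext v
    have : v ∈ N := htop ▸ Submodule.mem_top
    simpa using (hmemN v).mp this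

lemma CST.eq_smul_of_mem_repHom {V₁ V₂ : Type*} [AddCommGroup V₁] [Module ℂ V₁]
    [AddCommGroup V₂] [Module ℂ V₂] [FiniteDimensional ℂ V₂]
    (π₁ : Representation ℂ G V₁) (π₂ : Representation ℂ G V₂)
    (hirr₂ : IsIrreducible π₂) (e : V₁ ≃ₗ[ℂ] V₂)
    (he : ∀ (g : G) (v : V₁), e (π₁ g v) = π₂ g (e v))
    {B : V₁ →ₗ[ℂ] V₂} (hB : B ∈ repHom π₁ π₂) :
    ∃ c : ℂ, B = c • (e : V₁ →ₗ[ℂ] V₂) := by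
  rw [CST.mem_repHom_iff] at hB
  have hesymm : ∀ (g : G) (w : V₂), e.symm (π₂ g w) = π₁ g (e.symm w) := by
    intro g w
    apply e.injective
    rw [he, e.apply_symm_apply, e.apply_symm_apply]
  set f : V₂ →ₗ[ℂ] V₂ := B ∘ₗ (e.symm : V₂ →ₗ[ℂ] V₁) with hfdef
  have hf : ∀ (g : G) (w : V₂), f (π₂ g w) = π₂ g (f w) := by
    intro g w
    simp only [hfdef, LinearMap.comp_apply, LinearEquiv.coe_coe]
    rw [hesymm, hB]
  obtain ⟨c, hc⟩ := CST.scalar_of_comm π₂ hirr₂ f hf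
  refine ⟨c, ?_⟩
  ext v
  have := LinearMap.congr_fun hc (e v)
  simp only [hfdef, LinearMap.comp_apply, LinearEquiv.coe_coe, e.symm_apply_apply,
    LinearMap.smul_apply, LinearMap.id_apply] at this
  simpa using this

lemma CST.repEquiv_of_mem_ne_zero {V₁ V₂ : Type*} [AddCommGroup V₁] [Module ℂ V₁]
    [AddCommGroup V₂] [Module ℂ V₂]
    (π₁ : Representation ℂ G V₁) (π₂ : Representation ℂ G V₂)
    (hirr₁ : IsIrreducible π₁) (hirr₂ : IsIrreducible π₂)
    {B : V₁ →ₗ[ℂ] V₂} (hB : B ∈ repHom π₁ π₂) (hB0 : B ≠ 0) :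
    RepEquiv π₁ π₂ := by
  rw [CST.mem_repHom_iff] at hB
  have hker : LinearMap.ker B = ⊥ := by
    rcases hirr₁.2 (LinearMap.ker B) (by
      intro g v hv
      rw [LinearMap.mem_ker] at hv ⊢
      rw [hB, hv, map_zero]) with h | h
    · exact h
    · exact absurd (LinearMap.ker_eq_top.mp h) hB0
  have hrange : LinearMap.range B = ⊤ := by
    rcases hirr₂.2 (LinearMap.range B) (by
      rintro g v ⟨w, rfl⟩
      exact ⟨π₁ g w, hB g w⟩) with h | h
    · exact absurd (LinearMap.range_eq_bot.mp h) hB0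
    · exact h
  refine ⟨LinearEquiv.ofBijective B ⟨LinearMap.ker_eq_bot.mp hker,
    LinearMap.range_eq_top.mp hrange⟩, fun g v => hB g v⟩

lemma CST.FSnum_spec {V : Type*} [AddCommGroup V] [Module ℂ V]
    [FiniteDimensional ℂ V] (π : Representation ℂ G V) (hirr : IsIrreducible π)
    (τ : G → G) (hmul : ∀ a b : G, τ (a * b) = τ b * τ a)
    (e : Module.Dual ℂ V ≃ₗ[ℂ] V)
    (he : ∀ (g : G) (φ : Module.Dual ℂ V), e (tauConj π τ hmul g φ) = π g (e φ))
    (c : ℂ) (hc : ∀ φ ψ : Module.Dual ℂ V, φ (e ψ) = c * ψ (e φ)) :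
    (c = 1 ∧ FSnum π τ hmul = 1) ∨ (c = -1 ∧ FSnum π τ hmul = -1) := by
  haveI : Nontrivial V := hirr.1
  have heL : (e : Module.Dual ℂ V →ₗ[ℂ] V) ∈ repHom (tauConj π τ hmul) π :=
    CST.mem_repHom_iff.mpr (by simpa using he)
  obtain ⟨v₀, hv₀⟩ := exists_ne (0 : V)
  have heψ₀ : e (e.symm v₀) ≠ 0 := by
    rw [e.apply_symm_apply]; exact hv₀
  obtain ⟨φ₀, hφ₀⟩ := CST.exists_dual_ne_zero heψ₀
  set ψ₀ := e.symm v₀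
  have hene : (e : Module.Dual ℂ V →ₗ[ℂ] V) ≠ 0 := by
    intro h
    apply heψ₀
    have := LinearMap.congr_fun h ψ₀
    simpa using this
  have hcc : c * c = 1 := by
    have h1 := hc φ₀ ψ₀
    have h2 := hc ψ₀ φ₀
    have h3 : (c * c) * (φ₀ (e ψ₀)) = 1 * (φ₀ (e ψ₀)) := by
      rw [one_mul, mul_assoc, ← h2, ← h1]
    exact mul_right_cancel₀ hφ₀ h3
  have hspan : ∀ B ∈ repHom (tauConj π τ hmul) π,
      ∃ lam : ℂ, B = lam • (e : Module.Dual ℂ V →ₗ[ℂ] V) :=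
    fun B hB => CST.eq_smul_of_mem_repHom _ π hirr e he hB
  rcases mul_self_eq_one_iff.mp hcc with h1 | h1
  · left
    refine ⟨h1, ?_⟩
    subst h1
    simp only [one_mul] at hc
    have hsym : repHom (tauConj π τ hmul) π ⊓ symSub ℂ V
        = Submodule.span ℂ {(e : Module.Dual ℂ V →ₗ[ℂ] V)} := by
      apply le_antisymm
      · rintro B hB
        obtain ⟨lam, rfl⟩ := hspan B hB.1
        exact Submodule.smul_mem _ _ (Submodule.mem_span_singleton_self _)
      · rw [Submodule.span_le, Set.singleton_subset_iff]
        refine ⟨heL, fun φ ψ => by simpa using hc φ ψ⟩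
    have hskew : repHom (tauConj π τ hmul) π ⊓ skewSub ℂ V = ⊥ := by
      rw [eq_bot_iff]
      rintro B hB
      obtain ⟨lam, rfl⟩ := hspan B hB.1
      have hB2 := hB.2 φ₀ ψ₀
      simp only [LinearMap.smul_apply, LinearEquiv.coe_coe, smul_eq_mul, map_smul] at hB2
      rw [hc ψ₀ φ₀] at hB2
      have : (2 * lam) * (φ₀ (e ψ₀)) = 0 := by ring_nf; linear_combination hB2
      have hlam : lam = 0 := by
        rcases mul_eq_zero.mp this with h | h
        · rcases mul_eq_zero.mp h with h' | h'
          · exact absurd h' two_ne_zero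
          · exact h'
        · exact absurd h hφ₀
      simp [hlam, Submodule.mem_bot]
    rw [FSnum, hsym, hskew, finrank_span_singleton hene]
    simp
  · right
    refine ⟨h1, ?_⟩
    subst h1
    have hc' : ∀ φ ψ : Module.Dual ℂ V, φ (e ψ) = -(ψ (e φ)) := by
      intro φ ψ; rw [hc φ ψ]; ring
    have hskew : repHom (tauConj π τ hmul) π ⊓ skewSub ℂ V
        = Submodule.span ℂ {(e : Module.Dual ℂ V →ₗ[ℂ] V)} := by
      apply le_antisymm
      · rintro B hB
        obtain ⟨lam, rfl⟩ := hspan B hB.1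
        exact Submodule.smul_mem _ _ (Submodule.mem_span_singleton_self _)
      · rw [Submodule.span_le, Set.singleton_subset_iff]
        refine ⟨heL, fun φ ψ => by simpa using hc' φ ψ⟩
    have hsym : repHom (tauConj π τ hmul) π ⊓ symSub ℂ V = ⊥ := by
      rw [eq_bot_iff]
      rintro B hB
      obtain ⟨lam, rfl⟩ := hspan B hB.1
      have hB2 := hB.2 φ₀ ψ₀
      simp only [LinearMap.smul_apply, LinearEquiv.coe_coe, smul_eq_mul, map_smul] at hB2
      rw [hc' ψ₀ φ₀] at hB2
      have : (2 * lam) * (φ₀ (e ψ₀)) = 0 := by ring_nf; linear_combination hB2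
      have hlam : lam = 0 := by
        rcases mul_eq_zero.mp this with h | h
        · rcases mul_eq_zero.mp h with h' | h'
          · exact absurd h' two_ne_zero
          · exact h'
        · exact absurd h hφ₀
      simp [hlam, Submodule.mem_bot]
    rw [FSnum, hsym, hskew, finrank_span_singleton hene]
    simp

end Aux

/-- Let `K ≤ G` be `τ`-invariant and `ρ` an irreducible representation
of `G` whose restriction to `K` decomposes multiplicity-free as `σ₁ ⊕ ⋯ ⊕ σ_m` with the
`σ_i` irreducible and pairwise inequivalent. If `ρ^τ ∼ ρ` and `σ_i^τ ∼ σ_i` for all `i`,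
then `C_τ(σ_i) = C_τ(ρ)` for all `i`. -/
theorem FS_number_of_multiplicity_free_restriction
    {G : Type*} [Group G] [Fintype G]
    {W : Type*} [AddCommGroup W] [Module ℂ W] [FiniteDimensional ℂ W]
    (K : Subgroup G) (τ : G → G)
    (hmul : ∀ a b : G, τ (a * b) = τ b * τ a) (hinv : ∀ g : G, τ (τ g) = g)
    (hK : ∀ g : G, g ∈ K ↔ τ g ∈ K)
    (τK : K → K) (hτK : ∀ x : K, (τK x : G) = τ x)
    (hmulK : ∀ a b : K, τK (a * b) = τK b * τK a)
    (ρ : Representation ℂ G W) (hirr : CST.IsIrreducible ρ)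
    (m : ℕ) (U : Fin m → Submodule ℂ W)
    (hU : ∀ i, ∀ (x : K), ∀ w ∈ U i, (ρ.comp K.subtype) x w ∈ U i)
    (hint : DirectSum.IsInternal U)
    (hirrU : ∀ i, CST.IsIrreducible (CST.subRep (ρ.comp K.subtype) (U i) (hU i)))
    (hdist : ∀ i j, i ≠ j →
      ¬ CST.RepEquiv (CST.subRep (ρ.comp K.subtype) (U i) (hU i))
          (CST.subRep (ρ.comp K.subtype) (U j) (hU j)))
    (hρτ : CST.RepEquiv (CST.tauConj ρ τ hmul) ρ)
    (hστ : ∀ i, CST.RepEquiv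
        (CST.tauConj (CST.subRep (ρ.comp K.subtype) (U i) (hU i)) τK hmulK)
        (CST.subRep (ρ.comp K.subtype) (U i) (hU i))) :
    ∀ i, CST.FSnum (CST.subRep (ρ.comp K.subtype) (U i) (hU i)) τK hmulK =
      CST.FSnum ρ τ hmul := by
  classical
  intro i
  have hinvK : ∀ x : K, τK (τK x) = x := by
    intro x
    apply Subtype.ext
    rw [hτK, hτK, hinv]
  obtain ⟨e, he⟩ := hρτ
  obtain ⟨ei, hei⟩ := hστ i
  -- the symmetry constant for ρ
  have heL : (e : Module.Dual ℂ W →ₗ[ℂ] W) ∈ CST.repHom (CST.tauConj ρ τ hmul) ρ :=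
    CST.mem_repHom_iff.mpr (by simpa using he)
  have htr := CST.transp_mem_repHom ρ τ hmul hinv heL
  obtain ⟨c, hcE⟩ := CST.eq_smul_of_mem_repHom _ ρ hirr e he htr
  have hc : ∀ φ ψ : Module.Dual ℂ W, φ (e ψ) = c * ψ (e φ) := by
    intro φ ψ
    have h1 : ψ (CST.transp (e : Module.Dual ℂ W →ₗ[ℂ] W) φ) = φ (e ψ) := by
      rw [CST.transp_apply]; rfl
    rw [← h1, hcE]
    simp [mul_comm]
  -- the symmetry constant for σᵢ
  have heiL : (ei : Module.Dual ℂ (U i) →ₗ[ℂ] (U i)) ∈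
      CST.repHom (CST.tauConj (CST.subRep (ρ.comp K.subtype) (U i) (hU i)) τK hmulK)
        (CST.subRep (ρ.comp K.subtype) (U i) (hU i)) :=
    CST.mem_repHom_iff.mpr (by simpa using hei)
  have htri := CST.transp_mem_repHom _ τK hmulK hinvK heiL
  obtain ⟨ci, hcEi⟩ := CST.eq_smul_of_mem_repHom _ _ (hirrU i) ei hei htri
  have hci : ∀ φ ψ : Module.Dual ℂ (U i), φ (ei ψ) = ci * ψ (ei φ) := by
    intro φ ψ
    have h1 : ψ (CST.transp (ei : Module.Dual ℂ (U i) →ₗ[ℂ] (U i)) φ) = φ (ei ψ) := by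
      rw [CST.transp_apply]; rfl
    rw [← h1, hcEi]
    simp [mul_comm]
  -- projections from the internal direct sum decomposition
  set E := LinearEquiv.ofBijective (DirectSum.coeLinearMap U) hint with hE
  set P : ∀ j, W →ₗ[ℂ] U j :=
    fun j => DirectSum.component ℂ (Fin m) (fun j => U j) j ∘ₗ
      E.symm.toLinearMap with hP
  have hP_apply : ∀ (j) (w : W), P j w = E.symm w j := by
    intro j w
    simp [hP, DirectSum.component, DFinsupp.lapply]
  have hP_same : ∀ (j) (u : U j), P j ↑u = u := by
    intro j u
    rw [hP_apply]
    exact hint.ofBijective_coeLinearMap_same u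
  have hP_ne : ∀ (j j') (_ : j ≠ j') (u : U j), P j' ↑u = 0 := by
    intro j j' hjj u
    rw [hP_apply]
    exact hint.ofBijective_coeLinearMap_of_ne hjj u
  have hP_sum : ∀ w : W, ∑ j, ((P j w : W)) = w := by
    intro w
    have h1 : ∀ j, ((P j w : W)) =
        DirectSum.coeLinearMap U (DirectSum.of (fun j => U j) j (P j w)) := by
      intro j
      rw [DirectSum.coeLinearMap_of]
    calc ∑ j, ((P j w : W))
        = ∑ j, DirectSum.coeLinearMap U (DirectSum.of (fun j => U j) j (P j w)) := by
          simp_rw [h1]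
      _ = DirectSum.coeLinearMap U (∑ j, DirectSum.of (fun j => U j) j (E.symm w j)) := by
          rw [map_sum]
          exact Finset.sum_congr rfl fun j _ => by rw [hP_apply]
      _ = DirectSum.coeLinearMap U (E.symm w) := by rw [DirectSum.sum_univ_of]
      _ = E (E.symm w) := rfl
      _ = w := E.apply_symm_apply w
  -- equivariance of the projections
  have hP_equiv : ∀ (j) (x : K) (w : W),
      P j ((ρ.comp K.subtype) x w) =
        (CST.subRep (ρ.comp K.subtype) (U j) (hU j)) x (P j w) := by
    intro j x w
    have hsum : (ρ.comp K.subtype) x w =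
        ∑ j', ((⟨(ρ.comp K.subtype) x ↑(P j' w),
          hU j' x _ (P j' w).2⟩ : U j') : W) := by
      have : (ρ.comp K.subtype) x w = (ρ.comp K.subtype) x (∑ j', ((P j' w : W))) := by
        rw [hP_sum]
      rw [this, map_sum]
    rw [hsum, map_sum, Finset.sum_eq_single j]
    · rw [hP_same]
      apply Subtype.ext
      rfl
    · intro j' _ hj'
      exact hP_ne j' j (by exact hj') _
    · intro h
      exact absurd (Finset.mem_univ j) h
  -- the cross-block maps are intertwiners
  have crossHom : ∀ j, (P i ∘ₗ (e : Module.Dual ℂ W →ₗ[ℂ] W) ∘ₗ (P j).dualMap) ∈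
      CST.repHom (CST.tauConj (CST.subRep (ρ.comp K.subtype) (U j) (hU j)) τK hmulK)
        (CST.subRep (ρ.comp K.subtype) (U i) (hU i)) := by
    intro j
    rw [CST.mem_repHom_iff]
    intro x φ
    have stepa : (P j).dualMap
        (CST.tauConj (CST.subRep (ρ.comp K.subtype) (U j) (hU j)) τK hmulK x φ) =
        CST.tauConj ρ τ hmul (↑x) ((P j).dualMap φ) := by
      apply LinearMap.ext
      intro w
      show φ ((CST.subRep (ρ.comp K.subtype) (U j) (hU j)) (τK x) (P j w)) =
        φ (P j (ρ (τ ↑x) w))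
      have h5 : (ρ.comp K.subtype) (τK x) w = ρ (τ ↑x) w := by
        show ρ (↑(τK x)) w = ρ (τ ↑x) w
        rw [hτK]
      rw [← h5, hP_equiv j (τK x) w]
    simp only [LinearMap.comp_apply, LinearEquiv.coe_coe]
    rw [stepa, he, ← hP_equiv i x _]
    rfl
  set A : Module.Dual ℂ (U i) →ₗ[ℂ] (U i) :=
    P i ∘ₗ (e : Module.Dual ℂ W →ₗ[ℂ] W) ∘ₗ (P i).dualMap with hA
  have hA_mem := crossHom i
  have hA_sym : ∀ φ ψ : Module.Dual ℂ (U i), φ (A ψ) = c * ψ (A φ) := by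
    intro φ ψ
    show ((P i).dualMap φ) (e ((P i).dualMap ψ)) = c * ((P i).dualMap ψ) (e ((P i).dualMap φ))
    exact hc _ _
  -- A is nonzero
  have hA_ne : A ≠ 0 := by
    intro h0
    have hcross : ∀ j, (P i ∘ₗ (e : Module.Dual ℂ W →ₗ[ℂ] W) ∘ₗ (P j).dualMap) = 0 := by
      intro j
      by_cases hji : j = i
      · subst hji
        exact h0
      · by_contra hne
        obtain ⟨ej, hej⟩ := hστ j
        have hejsymm : ∀ (x : K) (w : U j), ej.symm
            ((CST.subRep (ρ.comp K.subtype) (U j) (hU j)) x w) =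
            CST.tauConj (CST.subRep (ρ.comp K.subtype) (U j) (hU j)) τK hmulK x
              (ej.symm w) := by
          intro x w
          apply ej.injective
          rw [hej, ej.apply_symm_apply, ej.apply_symm_apply]
        set B := (P i ∘ₗ (e : Module.Dual ℂ W →ₗ[ℂ] W) ∘ₗ (P j).dualMap) ∘ₗ
          (ej.symm : U j →ₗ[ℂ] Module.Dual ℂ (U j)) with hB
        have hBmem : B ∈ CST.repHom (CST.subRep (ρ.comp K.subtype) (U j) (hU j))
            (CST.subRep (ρ.comp K.subtype) (U i) (hU i)) := by
          rw [CST.mem_repHom_iff]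
          intro x w
          have h1 := CST.mem_repHom_iff.mp (crossHom j) x (ej.symm w)
          simp only [hB, LinearMap.comp_apply, LinearEquiv.coe_coe]
          rw [hejsymm]
          exact h1
        have hB0 : B ≠ 0 := by
          intro hB0
          apply hne
          apply LinearMap.ext
          intro φ
          have := LinearMap.congr_fun hB0 (ej φ)
          simpa [hB, ej.symm_apply_apply] using this
        exact hdist j i hji
          (CST.repEquiv_of_mem_ne_zero _ _ (hirrU j) (hirrU i) hBmem hB0)
    have hPie : ∀ ξ : Module.Dual ℂ W, P i (e ξ) = 0 := by
      intro ξ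
      have hξ : ξ = ∑ j, (P j).dualMap ((U j).subtype.dualMap ξ) := by
        apply LinearMap.ext
        intro w
        show ξ w = _
        have : (∑ j, (P j).dualMap ((U j).subtype.dualMap ξ)) w
            = ∑ j, ξ ((P j w : W)) := by
          rw [LinearMap.sum_apply]
          rfl
        rw [this, ← map_sum, hP_sum]
      rw [hξ, map_sum, map_sum]
      apply Finset.sum_eq_zero
      intro j _
      have := LinearMap.congr_fun (hcross j) ((U j).subtype.dualMap ξ)
      simpa using this
    haveI : Nontrivial (U i) := (hirrU i).1
    obtain ⟨u, hu⟩ := exists_ne (0 : U i)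
    apply hu
    have h1 : P i ((u : W)) = u := hP_same i u
    have h2 : (u : W) = e (e.symm (u : W)) := (e.apply_symm_apply _).symm
    rw [← h1, h2, hPie]
  -- conclude c = ci
  obtain ⟨lam, hlam⟩ := CST.eq_smul_of_mem_repHom _ _ (hirrU i) ei hei hA_mem
  rw [← hA] at hlam
  have hA_sym' : ∀ φ ψ : Module.Dual ℂ (U i), φ (A ψ) = ci * ψ (A φ) := by
    intro φ ψ
    rw [hlam]
    simp only [LinearMap.smul_apply, LinearEquiv.coe_coe, map_smul, smul_eq_mul]
    rw [hci φ ψ]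
    ring
  have hAφ : ∃ φ : Module.Dual ℂ (U i), A φ ≠ 0 := by
    by_contra h
    push_neg at h
    exact hA_ne (LinearMap.ext fun φ => by simpa using h φ)
  obtain ⟨φ₂, hφ₂⟩ := hAφ
  obtain ⟨ψ₂, hψ₂⟩ := CST.exists_dual_ne_zero hφ₂
  have hcci : c = ci := by
    have h2 : c * ψ₂ (A φ₂) = ci * ψ₂ (A φ₂) :=
      (hA_sym φ₂ ψ₂).symm.trans (hA_sym' φ₂ ψ₂)
    exact mul_right_cancel₀ hψ₂ h2
  -- finish via the FS number computation
  have specρ := CST.FSnum_spec ρ hirr τ hmul e he c hc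
  have specσ := CST.FSnum_spec _ (hirrU i) τK hmulK ei hei ci hci
  rcases specρ with ⟨hc1, hF1⟩ | ⟨hc1, hF1⟩ <;>
    rcases specσ with ⟨hc2, hF2⟩ | ⟨hc2, hF2⟩
  · rw [hF1, hF2]
  · exfalso
    rw [hcci, hc2] at hc1
    norm_num at hc1
  · exfalso
    rw [hcci, hc2] at hc1
    norm_num at hc1
  · rw [hF1, hF2]
end
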